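/- arXiv:2405.16653 — 5 statements merged into one kernel-verified Lean document; each statement's English description precedes it below -/
import Mathlib

section
/- For all n, k ∈ ℕ with k ≥ 1, any n-vertex graph with no path on k+1 vertices (as a subgraph) has at most (k-1)n/2 edges. -/
set_option linter.unusedSectionVars false
set_option maxHeartbeats 1000000
open List Finset SimpleGraph

section del
variable {V : Type*} [Fintype V] [DecidableEq V] (G : SimpleGraph V) [DecidableRel G.Adj] (v : V)

def Gdel : SimpleGraph {x : V // x ≠ v} := G.comap (Subtype.val)

instance : DecidableRel (Gdel G v).Adj := fun a b => ‹DecidableRel G.Adj› a.val b.val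

lemma card_ne : Fintype.card {x : V // x ≠ v} = Fintype.card V - 1 := by
  simp [Fintype.card_subtype_compl]

lemma deg_del (w : V) (hw : w ≠ v) :
    G.degree w = (Gdel G v).degree ⟨w, hw⟩ + (if G.Adj w v then 1 else 0) := by
  classical
  have h1 : G.degree w = #(univ.filter (G.Adj w)) := by
    rw [← card_neighborFinset_eq_degree, neighborFinset_eq_filter]
  have h2 : (Gdel G v).degree ⟨w, hw⟩
      = Fintype.card {y : {x : V // x ≠ v} // G.Adj w y.val} := by
    rw [← card_neighborSet_eq_degree]
    rfl
  have h3 : Fintype.card {y : {x : V // x ≠ v} // G.Adj w y.val}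
      = Fintype.card {u : V // G.Adj w u ∧ u ≠ v} := by
    apply Fintype.card_congr
    exact ⟨fun y => ⟨y.1.1, y.2, y.1.2⟩, fun u => ⟨⟨u.1, u.2.2⟩, u.2.1⟩,
      fun _ => rfl, fun _ => rfl⟩
  have h4 : #((univ.filter (G.Adj w)).filter (· ≠ v))
      + #((univ.filter (G.Adj w)).filter (fun u => ¬ u ≠ v)) = #(univ.filter (G.Adj w)) :=
    Finset.card_filter_add_card_filter_not _
  have h5 : (univ.filter (G.Adj w)).filter (fun u => ¬ u ≠ v)
      = if G.Adj w v then {v} else ∅ := by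
    ext x
    by_cases h : G.Adj w v <;> simp_all [eq_comm] <;> aesop
  have h6 : #((univ.filter (G.Adj w)).filter (· ≠ v))
      = Fintype.card {u : V // G.Adj w u ∧ u ≠ v} := by
    rw [Fintype.card_subtype, Finset.filter_filter]
  rw [h1, ← h4, h2, h3, ← h6, h5]
  by_cases h : G.Adj w v <;> simp [h]

lemma sum_deg_del :
    (∑ w, G.degree w) = (∑ x : {x : V // x ≠ v}, (Gdel G v).degree x) + 2 * G.degree v := by
  classical
  have hsub : ∀ f : V → ℕ, ∑ w ∈ univ.erase v, f w = ∑ x : {x : V // x ≠ v}, f x.val := by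
    intro f
    rw [Finset.sum_subtype (p := fun x => x ≠ v) (univ.erase v) (by simp) f]
  have h0 : (∑ w, G.degree w) = G.degree v + ∑ w ∈ univ.erase v, G.degree w :=
    (Finset.add_sum_erase univ _ (mem_univ v)).symm
  have h1 : ∑ w ∈ univ.erase v, G.degree w
      = ∑ x : {x : V // x ≠ v}, (G.degree x.val) := hsub _
  have h2 : ∑ x : {x : V // x ≠ v}, (G.degree x.val)
      = ∑ x : {x : V // x ≠ v}, ((Gdel G v).degree x + (if G.Adj x.val v then 1 else 0)) := by
    apply Finset.sum_congr rfl
    intro x _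
    exact deg_del G v x.val x.2
  have h3 : ∑ x : {x : V // x ≠ v}, (if G.Adj x.val v then 1 else 0)
      = G.degree v := by
    rw [← hsub (fun w => if G.Adj w v then 1 else 0), Finset.sum_boole]
    have : (univ.erase v).filter (fun w => G.Adj w v) = G.neighborFinset v := by
      ext x
      simp only [Finset.mem_filter, Finset.mem_erase, mem_univ, and_true,
        mem_neighborFinset, true_and]
      constructor
      · rintro ⟨-, h⟩; exact h.symm
      · intro h; exact ⟨h.ne', h.symm⟩
    rw [this]
    simp [card_neighborFinset_eq_degree]
  rw [h0, h1, h2, Finset.sum_add_distrib, h3]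
  ring
end del


section comp
variable {V : Type*} [Fintype V] [DecidableEq V] (G : SimpleGraph V) [DecidableRel G.Adj]

lemma reach_head' {G : SimpleGraph V} :
    ∀ (a : V) (t : List V), List.IsChain G.Adj (a :: t) → ∀ x ∈ a :: t, G.Reachable a x := by
  intro a t
  induction t generalizing a with
  | nil => intro _ x hx; simp at hx; subst hx; rfl
  | cons b t ih =>
    intro h x hx
    rw [List.isChain_cons_cons] at h
    rcases List.mem_cons.1 hx with rfl | hx
    · rfl
    · exact (h.1.reachable).trans (ih b h.2 x hx)

lemma chain'_reachable' {G : SimpleGraph V} {l : List V}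
    (h : List.IsChain G.Adj l) {x y : V} (hx : x ∈ l) (hy : y ∈ l) : G.Reachable x y := by
  cases l with
  | nil => simp at hx
  | cons a t => exact (reach_head' a t h x hx).symm.trans (reach_head' a t h y hy)

lemma exists_max_list {k : ℕ} {P : List V → Prop} (hne : ∃ l, P l)
    (hbd : ∀ l, P l → l.length ≤ k) :
    ∃ l, P l ∧ ∀ q, P q → q.length ≤ l.length := by
  by_contra h
  push_neg at h
  have key : ∀ j : ℕ, ∃ l, P l ∧ j ≤ l.length := by
    intro j
    induction j with
    | zero => obtain ⟨l, hl⟩ := hne; exact ⟨l, hl, Nat.zero_le _⟩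
    | succ j ih =>
      obtain ⟨l, hl, hjl⟩ := ih
      obtain ⟨q, hq, hlq⟩ := h l hl
      exact ⟨q, hq, by omega⟩
  obtain ⟨l, hl, hkl⟩ := key (k+1)
  have := hbd l hl
  omega

lemma chain'_rotate' {R : V → V → Prop} {l : List V}
    (h : List.IsChain R l) (hcyc : ∀ x ∈ l.getLast?, ∀ y ∈ l.head?, R x y) (n : ℕ) :
    List.IsChain R (l.rotate n) := by
  rcases eq_or_ne l [] with rfl | hnil
  · simp
  rw [← List.rotate_mod]
  have hle : n % l.length ≤ l.length :=
    (Nat.mod_lt _ (List.length_pos_iff.2 hnil)).le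
  rw [List.rotate_eq_drop_append_take hle]
  have hll : List.IsChain R (l ++ l) := by
    rw [List.isChain_append]
    exact ⟨h, h, hcyc⟩
  apply hll.infix
  exact ⟨l.take (n % l.length), l.drop (n % l.length), by
    conv_rhs => rw [← List.take_append_drop (n % l.length) l]
    simp only [List.append_assoc]⟩

lemma crossing {G : SimpleGraph V} {S : Set V} :
    ∀ (q : List V), List.IsChain G.Adj q → ∀ (hq : q ≠ []), q.head hq ∉ S → q.getLast hq ∈ S →
      ∃ x ∈ q, ∃ y, x ∉ S ∧ y ∈ S ∧ G.Adj x y := by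
  intro q
  induction q with
  | nil => simp
  | cons a t ih =>
    intro hc hq ha hlast
    cases t with
    | nil => simp at ha hlast; exact absurd hlast ha
    | cons b t' =>
      rw [List.isChain_cons_cons] at hc
      by_cases hb : b ∈ S
      · exact ⟨a, by simp, b, ha, hb, hc.1⟩
      · have hlast' : (b :: t').getLast (by simp) ∈ S := by
          rwa [List.getLast_cons (by simp)] at hlast
        obtain ⟨x, hx, y, h1, h2, h3⟩ := ih hc.2 (by simp) (by simpa using hb) hlast'
        exact ⟨x, by simp [hx], y, h1, h2, h3⟩

lemma degree_add_one_le (k : ℕ) (hk : 1 ≤ k)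
    (H : ∀ l : List V, l.IsChain G.Adj → l.Nodup → l.length ≤ k)
    (Hdeg : ∀ v, k ≤ 2 * G.degree v) (v₀ : V) :
    G.degree v₀ + 1 ≤ k := by
  classical
  set C : Finset V := univ.filter (fun x => G.Reachable v₀ x) with hCdef
  have hCcard : C.card ≤ k := by
    by_contra hC
    push_neg at hC
    -- maximal path in the component
    have hbase : List.IsChain G.Adj [v₀] ∧ ([v₀] : List V).Nodup ∧ ([v₀] : List V) ≠ [] ∧
        ∀ x ∈ ([v₀] : List V), x ∈ C := by
      refine ⟨List.isChain_singleton _, List.nodup_singleton _, by simp, ?_⟩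
      intro x hx
      simp only [List.mem_singleton] at hx
      subst hx
      simp only [hCdef, Finset.mem_filter, Finset.mem_univ, true_and]
      exact Reachable.refl _
    obtain ⟨p, ⟨pc, pn, pne, pC⟩, pmax⟩ :=
      exists_max_list (k := k)
        (P := fun l => l.IsChain G.Adj ∧ l.Nodup ∧ l ≠ [] ∧ ∀ x ∈ l, x ∈ C)
        ⟨[v₀], hbase⟩ (fun l hl => H l hl.1 hl.2.1)
    set m := p.length with hm
    have hm1 : 1 ≤ m := List.length_pos_iff.2 pne
    have hmk : m ≤ k := H p pc pn
    set a := p.head pne with hadef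
    set b := p.getLast pne with hbdef
    have ha_mem : a ∈ p := List.head_mem pne
    have hb_mem : b ∈ p := List.getLast_mem pne
    have haC : G.Reachable v₀ a := by
      have := pC a ha_mem; simp [hCdef] at this; exact this
    -- all neighbors of a and b lie on p
    have Nbhd_a : ∀ y, G.Adj a y → y ∈ p := by
      intro y hy
      by_contra hyp
      have h1 : ∀ z ∈ p.head?, G.Adj y z := by
        intro z hz
        rw [List.head?_eq_head pne] at hz
        simp only [Option.mem_some_iff] at hz
        subst hz
        exact hy.symm
      have h2 : ∀ x ∈ y :: p, x ∈ C := by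
        intro x hx
        rcases List.mem_cons.1 hx with rfl | hx
        · simp only [hCdef, Finset.mem_filter, Finset.mem_univ, true_and]
          exact haC.trans hy.reachable
        · exact pC x hx
      have := pmax (y :: p) ⟨List.isChain_cons.2 ⟨h1, pc⟩, pn.cons hyp, by simp, h2⟩
      simp only [List.length_cons, hm] at this
      omega
    have Nbhd_b : ∀ y, G.Adj b y → y ∈ p := by
      intro y hy
      by_contra hyp
      have h1 : ∀ x ∈ p.getLast?, ∀ z ∈ ([y] : List V).head?, G.Adj x z := by
        intro x hx z hz
        rw [List.getLast?_eq_getLast_of_ne_nil pne] at hx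
        simp only [Option.mem_some_iff, List.head?_cons] at hx hz
        subst hx; subst hz
        exact hy
      have h2 : (p ++ [y]).Nodup := by
        rw [List.nodup_append]
        exact ⟨pn, List.nodup_singleton y, by simpa using fun a ha (h : a = y) => hyp (h ▸ ha)⟩
      have h3 : ∀ x ∈ p ++ [y], x ∈ C := by
        intro x hx
        rcases List.mem_append.1 hx with hx | hx
        · exact pC x hx
        · simp only [List.mem_singleton] at hx
          subst hx
          simp only [hCdef, Finset.mem_filter, Finset.mem_univ, true_and]
          have hbC : G.Reachable v₀ b := by
            have := pC b hb_mem
            simp only [hCdef, Finset.mem_filter, Finset.mem_univ, true_and] at this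
            exact this
          exact hbC.trans hy.reachable
      have := pmax (p ++ [y])
        ⟨List.isChain_append.2 ⟨pc, List.isChain_singleton y, h1⟩, h2, by simp, h3⟩
      simp only [List.length_append, List.length_singleton, hm] at this
      omega
    -- indexing
    set pi : ℕ → V := fun i => p.getD i a with hpidef
    have hpi : ∀ (i : ℕ) (h : i < p.length), pi i = p[i] := fun i h => List.getD_eq_getElem p a h
    have hinj : ∀ i j (hi : i < p.length) (hj : j < p.length), p[i] = p[j] → i = j := by
      intro i j hi hj hij
      have h2 : (⟨i, hi⟩ : Fin p.length) = ⟨j, hj⟩ :=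
        List.nodup_iff_injective_getElem.1 pn hij
      simpa using h2
    have hpa : ∀ (h : 0 < p.length), p[0] = a := by
      intro h
      rw [List.getElem_zero]
    have hpb : ∀ (h : p.length - 1 < p.length), p[p.length - 1] = b := by
      intro h
      rw [hbdef, List.getLast_eq_getElem]
    -- the two index sets
    set A : Finset ℕ := (Finset.range (m-1)).filter (fun i => G.Adj a (pi (i+1))) with hA
    set B : Finset ℕ := (Finset.range (m-1)).filter (fun i => G.Adj b (pi i)) with hB
    have cardA : A.card = G.degree a := by
      rw [← card_neighborFinset_eq_degree]
      apply Finset.card_bij (fun i _ => pi (i+1))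
      · intro i hi
        rw [hA, Finset.mem_filter] at hi
        rw [SimpleGraph.mem_neighborFinset]
        exact hi.2
      · intro i hi j hj heq
        rw [hA, Finset.mem_filter, Finset.mem_range] at hi hj
        have heq' : p[i+1]'(by omega) = p[j+1]'(by omega) :=
          ((hpi _ (by omega)).symm.trans heq).trans (hpi _ (by omega))
        have := hinj _ _ (by omega) (by omega) heq'
        omega
      · intro y hy
        have hy' : G.Adj a y := by rwa [SimpleGraph.mem_neighborFinset] at hy
        have hyp' := Nbhd_a y hy'
        have hj : p.idxOf y < p.length := List.idxOf_lt_length_iff.2 hyp'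
        have hpj : p[p.idxOf y] = y := List.getElem_idxOf hj
        have hj0 : p.idxOf y ≠ 0 := by
          intro h0
          apply G.loopless.irrefl a
          simp only [h0] at hpj
          rw [hpa (by omega)] at hpj
          rw [← hpj] at hy'
          exact hy'
        refine ⟨p.idxOf y - 1, ?_, ?_⟩
        · rw [hA, Finset.mem_filter, Finset.mem_range]
          constructor
          · omega
          · rw [hpi _ (by omega)]
            have h9 : p.idxOf y - 1 + 1 = p.idxOf y := by omega
            simp only [h9]
            rw [hpj]
            exact hy'
        · rw [hpi _ (by omega)]
          have h9 : p.idxOf y - 1 + 1 = p.idxOf y := by omega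
          simp only [h9]
          rw [hpj]
    have cardB : B.card = G.degree b := by
      rw [← card_neighborFinset_eq_degree]
      apply Finset.card_bij (fun i _ => pi i)
      · intro i hi
        rw [hB, Finset.mem_filter] at hi
        rw [SimpleGraph.mem_neighborFinset]
        exact hi.2
      · intro i hi j hj heq
        rw [hB, Finset.mem_filter, Finset.mem_range] at hi hj
        have heq' : p[i]'(by omega) = p[j]'(by omega) :=
          ((hpi _ (by omega)).symm.trans heq).trans (hpi _ (by omega))
        exact hinj _ _ (by omega) (by omega) heq'
      · intro y hy
        have hy' : G.Adj b y := by rwa [SimpleGraph.mem_neighborFinset] at hy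
        have hyp' := Nbhd_b y hy'
        have hj : p.idxOf y < p.length := List.idxOf_lt_length_iff.2 hyp'
        have hpj : p[p.idxOf y] = y := List.getElem_idxOf hj
        have hjm : p.idxOf y ≠ p.length - 1 := by
          intro h0
          apply G.loopless.irrefl b
          simp only [h0] at hpj
          rw [hpb (by omega)] at hpj
          rw [← hpj] at hy'
          exact hy'
        refine ⟨p.idxOf y, ?_, ?_⟩
        · rw [hB, Finset.mem_filter, Finset.mem_range]
          constructor
          · omega
          · rw [hpi _ (by omega), hpj]
            exact hy'
        · rw [hpi _ (by omega), hpj]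
    -- pigeonhole
    have hABsub : A ∪ B ⊆ Finset.range (m-1) :=
      Finset.union_subset (Finset.filter_subset _ _) (Finset.filter_subset _ _)
    have hABcard : (A ∪ B).card ≤ m - 1 := by
      have := Finset.card_le_card hABsub
      simpa using this
    have hABpos : 0 < (A ∩ B).card := by
      have h1 := Finset.card_inter_add_card_union A B
      rw [cardA, cardB] at h1
      have h2 := Hdeg a
      have h3 := Hdeg b
      omega
    obtain ⟨i, hiAB⟩ := Finset.card_pos.1 hABpos
    rw [Finset.mem_inter, hA, hB, Finset.mem_filter, Finset.mem_filter,
      Finset.mem_range] at hiAB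
    obtain ⟨⟨hilt, hiA⟩, -, hiB⟩ := hiAB
    -- the cycle
    set cyc : List V := p.take (i+1) ++ (p.drop (i+1)).reverse with hcyc
    have hperm : cyc ~ p := by
      have h1 : cyc ~ p.take (i+1) ++ p.drop (i+1) :=
        List.Perm.append_left _ (List.reverse_perm _)
      rwa [List.take_append_drop] at h1
    have hclen : cyc.length = m := hperm.length_eq
    have hcnodup : cyc.Nodup := hperm.nodup_iff.2 pn
    have ltake : (p.take (i+1)).length = i+1 := by
      rw [List.length_take]; omega
    have ldrop : (p.drop (i+1)).length = p.length - (i+1) := List.length_drop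
    have e1 : (p.take (i+1)).getLast? = some (p[i]'(by omega)) := by
      rw [List.getLast?_take, if_neg (by omega), Nat.add_sub_cancel,
        List.getElem?_eq_getElem (by omega), Option.some_or]
    have e2 : ((p.drop (i+1)).reverse).head? = some b := by
      rw [List.head?_reverse, List.getLast?_drop, if_neg (by omega),
        List.getLast?_eq_getLast_of_ne_nil pne, hbdef]
    have hchainc : List.IsChain G.Adj cyc := by
      rw [hcyc, List.isChain_append]
      refine ⟨pc.take _, ?_, ?_⟩
      · rw [List.isChain_reverse]
        exact (pc.drop _).imp (fun _ _ h => h.symm)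
      · intro x hx y hy
        rw [e1] at hx
        rw [e2] at hy
        simp only [Option.mem_some_iff] at hx hy
        subst hx; subst hy
        have h1 : pi i = p[i]'(by omega) := hpi _ (by omega)
        rw [← h1]
        exact hiB.symm
    have hclose : ∀ x ∈ cyc.getLast?, ∀ y ∈ cyc.head?, G.Adj x y := by
      have e3 : cyc.getLast? = some (p[i+1]'(by omega)) := by
        conv_lhs => rw [hcyc]
        rw [List.getLast?_append, List.getLast?_reverse, List.head?_drop,
          List.getElem?_eq_getElem (by omega), Option.some_or]
      have e4 : cyc.head? = some a := by
        conv_lhs => rw [hcyc]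
        rw [List.head?_append, List.head?_take, if_neg (by omega),
          List.head?_eq_head pne, Option.some_or, hadef]
      intro x hx y hy
      rw [e3] at hx
      rw [e4] at hy
      simp only [Option.mem_some_iff] at hx hy
      subst hx; subst hy
      have h1 : pi (i+1) = p[i+1]'(by omega) := hpi _ (by omega)
      rw [← h1]
      exact hiA.symm
    -- a vertex outside p attached to p
    have hpsub : p.toFinset ⊆ C := fun x hx => pC x (List.mem_toFinset.1 hx)
    have hcardp : p.toFinset.card = m := List.toFinset_card_of_nodup pn
    have hnsub : ¬ (C ⊆ p.toFinset) := by
      intro h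
      have := Finset.card_le_card h
      omega
    obtain ⟨z, hzC, hzp⟩ := Finset.not_subset.1 hnsub
    have hza : G.Reachable z a :=
      ((Finset.mem_filter.1 hzC).2.symm).trans haC
    obtain ⟨w⟩ := hza
    have hqc : List.IsChain G.Adj w.support := w.isChain_adj_support
    have hhead : w.support.head w.support_ne_nil ∉ {x : V | x ∈ p} := by
      simp only [Walk.head_support]
      intro hz
      exact hzp (List.mem_toFinset.2 hz)
    have hlastS : w.support.getLast w.support_ne_nil ∈ {x : V | x ∈ p} := by
      simp only [Walk.getLast_support]
      exact ha_mem
    obtain ⟨u, hu_mem, y, huS, hyS, huy⟩ :=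
      crossing w.support hqc w.support_ne_nil hhead hlastS
    have hup : u ∉ p := huS
    have hyinp : y ∈ p := hyS
    have huC : u ∈ C := by
      have h1 : G.Reachable z u :=
        chain'_reachable' hqc (w.start_mem_support) hu_mem
      simp only [hCdef, Finset.mem_filter, Finset.mem_univ, true_and]
      exact ((Finset.mem_filter.1 hzC).2).trans h1
    -- rotate the cycle to start at y and prepend u
    have hycyc : y ∈ cyc := hperm.mem_iff.2 hyinp
    have hjlt : cyc.idxOf y < cyc.length := List.idxOf_lt_length_iff.2 hycyc
    set r : List V := cyc.rotate (cyc.idxOf y) with hr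
    have hrperm : r ~ p := (List.rotate_perm cyc _).trans hperm
    have hrchain : List.IsChain G.Adj r := chain'_rotate' hchainc hclose _
    have hrhead : r.head? = some y := by
      rw [hr, List.rotate_eq_drop_append_take (le_of_lt hjlt), List.head?_append,
        List.head?_drop, List.getElem?_eq_getElem hjlt, List.getElem_idxOf hjlt,
        Option.some_or]
    have hnewchain : List.IsChain G.Adj (u :: r) := by
      rw [List.isChain_cons]
      refine ⟨?_, hrchain⟩
      intro z' hz'
      rw [hrhead] at hz'
      simp only [Option.mem_some_iff] at hz'
      subst hz'
      exact huy
    have hnewnodup : (u :: r).Nodup := by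
      rw [List.nodup_cons]
      exact ⟨fun h => hup (hrperm.mem_iff.1 h), hrperm.nodup_iff.2 pn⟩
    have hnewC : ∀ x ∈ u :: r, x ∈ C := by
      intro x hx
      rcases List.mem_cons.1 hx with rfl | hx
      · exact huC
      · exact pC x (hrperm.mem_iff.1 hx)
    have hfin := pmax (u :: r) ⟨hnewchain, hnewnodup, by simp, hnewC⟩
    have hrlen : r.length = m := hrperm.length_eq
    simp only [List.length_cons, hrlen] at hfin
    omega
  have hsub : insert v₀ (G.neighborFinset v₀) ⊆ C := by
    intro x hx
    simp only [Finset.mem_insert, mem_neighborFinset] at hx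
    simp only [hCdef, Finset.mem_filter, mem_univ, true_and]
    rcases hx with rfl | hx
    · rfl
    · exact hx.reachable
  have h2 := Finset.card_le_card hsub
  rw [Finset.card_insert_of_notMem (by simp), card_neighborFinset_eq_degree] at h2
  omega
end comp

section main
variable {k : ℕ}

lemma main_bound (k : ℕ) (hk : 1 ≤ k) :
    ∀ (n : ℕ) (V : Type) [Fintype V] [DecidableEq V] (G : SimpleGraph V) [DecidableRel G.Adj],
      Fintype.card V = n →
      (∀ l : List V, l.IsChain G.Adj → l.Nodup → l.length ≤ k) →
      ∑ v, G.degree v ≤ (k-1) * n := by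
  intro n
  induction n using Nat.strong_induction_on with
  | _ n ih =>
    intro V _ _ G _ hcard H
    by_cases hEx : ∃ v, 2 * G.degree v + 1 ≤ k
    · obtain ⟨v, hv⟩ := hEx
      have hn1 : 1 ≤ n := by
        rw [← hcard]
        exact Fintype.card_pos_iff.2 ⟨v⟩
      have hdel := sum_deg_del G v
      have hcard' : Fintype.card {x : V // x ≠ v} = n - 1 := by rw [card_ne, hcard]
      have H' : ∀ l : List {x : V // x ≠ v},
          l.IsChain (Gdel G v).Adj → l.Nodup → l.length ≤ k := by
        intro l hc hn
        have h1 : (l.map Subtype.val).IsChain G.Adj := by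
          rw [List.isChain_map]
          exact hc
        have h2 : (l.map Subtype.val).Nodup := hn.map Subtype.val_injective
        have := H _ h1 h2
        simpa using this
      have hih := ih (n-1) (by omega) {x : V // x ≠ v} (Gdel G v) hcard' H'
      have hsplit : (k-1) * n = (k-1)*(n-1) + (k-1) := by
        rw [← Nat.mul_succ, Nat.succ_eq_add_one, Nat.sub_add_cancel hn1]
      omega
    · push_neg at hEx
      have Hdeg : ∀ v, k ≤ 2 * G.degree v := fun v => by have := hEx v; omega
      have hdegle : ∀ v, G.degree v ≤ k - 1 := by
        intro v
        have := degree_add_one_le G k hk H Hdeg v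
        omega
      calc ∑ v, G.degree v ≤ ∑ _v : V, (k-1) := Finset.sum_le_sum (fun v _ => hdegle v)
        _ = (k-1) * n := by
            rw [Finset.sum_const, smul_eq_mul, Finset.card_univ, hcard, mul_comm]
end main

theorem stmt_0 (n k : ℕ) (hk : 1 ≤ k) (G : SimpleGraph (Fin n))
    (hP : ¬ ∃ f : Fin (k + 1) → Fin n, Function.Injective f ∧
      ∀ a b, (SimpleGraph.pathGraph (k + 1)).Adj a b → G.Adj (f a) (f b)) :
    (G.edgeSet.ncard : ℝ) ≤ ((k : ℝ) - 1) * n / 2 := by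
  classical
  have H : ∀ l : List (Fin n), l.IsChain G.Adj → l.Nodup → l.length ≤ k := by
    intro l hc hn
    by_contra hlen
    push_neg at hlen
    apply hP
    set l' : List (Fin n) := l.take (k+1) with hl'
    have hlen' : l'.length = k+1 := by
      rw [hl', List.length_take]
      omega
    have hn' : l'.Nodup := hn.sublist (List.take_sublist _ _)
    have hc' : l'.IsChain G.Adj := hc.take _
    have hchain := List.isChain_iff_getElem.1 hc'
    refine ⟨fun i => l'.get (Fin.cast hlen'.symm i), ?_, ?_⟩
    · intro x y hxy
      have h2 := List.nodup_iff_injective_get.1 hn' hxy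
      apply Fin.ext
      have h3 := congrArg Fin.val h2
      simpa using h3
    · intro x y hadj
      rw [SimpleGraph.pathGraph_adj] at hadj
      rcases hadj with h | h
      · have h1 := hchain x.val (by omega)
        have e1 : (Fin.cast hlen'.symm x) = ⟨x.val, by omega⟩ := by
          apply Fin.ext; rfl
        have e2 : (Fin.cast hlen'.symm y) = ⟨x.val + 1, by omega⟩ := by
          apply Fin.ext
          simp only [Fin.coe_cast]
          omega
        show G.Adj (l'.get (Fin.cast hlen'.symm x)) (l'.get (Fin.cast hlen'.symm y))
        rw [e1, e2]
        exact h1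
      · have h1 := hchain y.val (by omega)
        have e1 : (Fin.cast hlen'.symm y) = ⟨y.val, by omega⟩ := by
          apply Fin.ext; rfl
        have e2 : (Fin.cast hlen'.symm x) = ⟨y.val + 1, by omega⟩ := by
          apply Fin.ext
          simp only [Fin.coe_cast]
          omega
        show G.Adj (l'.get (Fin.cast hlen'.symm x)) (l'.get (Fin.cast hlen'.symm y))
        rw [e2, e1]
        exact h1.symm
  have key := main_bound k hk n (Fin n) G (by simp) H
  rw [SimpleGraph.sum_degrees_eq_twice_card_edges] at key
  have hE : G.edgeSet.ncard = G.edgeFinset.card := by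
    rw [Set.ncard_eq_toFinset_card']
    congr 1
  rw [hE]
  have hcast : ((2 * G.edgeFinset.card : ℕ) : ℝ) ≤ (((k-1) * n : ℕ) : ℝ) :=
    Nat.cast_le.2 key
  push_cast [Nat.cast_sub hk] at hcast
  linarith
end

section
/- Let H be a connected graph, T a spanning tree of H, n ≥ |V(H)|, and suppose c is an edge-colouring of K_n in which every copy of H receives at least |E(H)| - |V(H)| + 3 distinct colours. Then the number of colours used by c is at least C(n,2)/ex(n,T), where ex(n,T) is the maximum number of edges of an n-vertex graph with no copy of T. -/
theorem stmt_1 {α : Type} [Fintype α] (H T : SimpleGraph α)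
    (hH : H.Connected) (hT : T.IsTree) (hTH : T ≤ H)
    (n : ℕ) (hn : Fintype.card α ≤ n)
    (c : Sym2 (Fin n) → ℕ)
    (hcol : ∀ f : α → Fin n, Function.Injective f →
      H.edgeSet.ncard + 3 - Fintype.card α ≤ (c '' (Sym2.map f '' H.edgeSet)).ncard) :
    (n.choose 2 : ℝ) /
        ((sSup {m : ℕ | ∃ G : SimpleGraph (Fin n),
          (¬ ∃ g : α → Fin n, Function.Injective g ∧
            ∀ x y, T.Adj x y → G.Adj (g x) (g y)) ∧
          m = G.edgeSet.ncard} : ℕ) : ℝ) ≤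
      ((c '' (⊤ : SimpleGraph (Fin n)).edgeSet).ncard : ℝ) := by
  classical
  set M : Set ℕ := {m : ℕ | ∃ G : SimpleGraph (Fin n),
          (¬ ∃ g : α → Fin n, Function.Injective g ∧
            ∀ x y, T.Adj x y → G.Adj (g x) (g y)) ∧
          m = G.edgeSet.ncard} with hM
  set e := sSup M with he
  -- basic facts
  have haα : 1 ≤ Fintype.card α := Fintype.card_pos_iff.mpr hH.nonempty
  have hTsub : T.edgeSet ⊆ H.edgeSet := SimpleGraph.edgeSet_mono hTH
  have hTcard : T.edgeSet.ncard = Fintype.card α - 1 := by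
    rw [← SimpleGraph.coe_edgeFinset, Set.ncard_coe_finset]
    have := hT.card_edgeFinset
    omega
  have hHfin : H.edgeSet.Finite := Set.toFinite _
  have hHT : Fintype.card α - 1 ≤ H.edgeSet.ncard := by
    rw [← hTcard]; exact Set.ncard_le_ncard hTsub hHfin
  -- top edge count
  have htopcard : ((⊤ : SimpleGraph (Fin n)).edgeFinset).card = n.choose 2 := by
    rw [SimpleGraph.card_edgeFinset_top_eq_card_choose_two, Fintype.card_fin]
  have htopncard : ((⊤ : SimpleGraph (Fin n)).edgeSet).ncard = n.choose 2 := by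
    rw [← SimpleGraph.coe_edgeFinset, Set.ncard_coe_finset, htopcard]
  -- bddAbove
  have hbdd : BddAbove M := by
    refine ⟨n.choose 2, ?_⟩
    rintro m ⟨G, -, rfl⟩
    have : G.edgeSet.ncard ≤ ((⊤ : SimpleGraph (Fin n)).edgeSet).ncard :=
      Set.ncard_le_ncard (SimpleGraph.edgeSet_mono le_top) (Set.toFinite _)
    omega
  -- per-colour graph
  let Gv : ℕ → SimpleGraph (Fin n) := fun v =>
    { Adj := fun a b => a ≠ b ∧ c s(a, b) = v
      symm := by
        constructor; intro a b ⟨h1, h2⟩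
        exact ⟨h1.symm, by rwa [Sym2.eq_swap]⟩
      loopless := by constructor; intro a ⟨h1, _⟩; exact h1 rfl }
  -- each colour class is T-free
  have hTfree : ∀ v : ℕ, ¬ ∃ g : α → Fin n, Function.Injective g ∧
      ∀ x y, T.Adj x y → (Gv v).Adj (g x) (g y) := by
    rintro v ⟨g, hg, hadj⟩
    have hsub : c '' (Sym2.map g '' H.edgeSet) ⊆
        insert v (c '' (Sym2.map g '' (H.edgeSet \ T.edgeSet))) := by
      rintro y ⟨-, ⟨x, hx, rfl⟩, rfl⟩
      by_cases hxT : x ∈ T.edgeSet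
      · left
        induction x with
        | _ p q =>
          have := (hadj p q (T.mem_edgeSet.mp hxT)).2
          simpa using this
      · right
        exact ⟨Sym2.map g x, ⟨x, ⟨hx, hxT⟩, rfl⟩, rfl⟩
    have hub : (c '' (Sym2.map g '' H.edgeSet)).ncard ≤
        1 + (H.edgeSet \ T.edgeSet).ncard := by
      calc (c '' (Sym2.map g '' H.edgeSet)).ncard
          ≤ (insert v (c '' (Sym2.map g '' (H.edgeSet \ T.edgeSet)))).ncard :=
            Set.ncard_le_ncard hsub (Set.Finite.insert _
              (((hHfin.diff).image _).image _))
        _ ≤ 1 + (c '' (Sym2.map g '' (H.edgeSet \ T.edgeSet))).ncard := by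
            have := Set.ncard_insert_le v (c '' (Sym2.map g '' (H.edgeSet \ T.edgeSet)))
            omega
        _ ≤ 1 + (Sym2.map g '' (H.edgeSet \ T.edgeSet)).ncard := by
            have := Set.ncard_image_le (s := Sym2.map g '' (H.edgeSet \ T.edgeSet))
              (f := c) ((hHfin.diff).image _)
            omega
        _ ≤ 1 + (H.edgeSet \ T.edgeSet).ncard := by
            have := Set.ncard_image_le (s := H.edgeSet \ T.edgeSet)
              (f := Sym2.map g) (hHfin.diff)
            omega
    have hdiff : (H.edgeSet \ T.edgeSet).ncard
        = H.edgeSet.ncard - T.edgeSet.ncard :=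
      Set.ncard_diff hTsub (Set.toFinite _)
    have hlb := hcol g hg
    omega
  -- each colour class has ≤ e edges
  have hclass : ∀ v : ℕ, ((Gv v).edgeSet).ncard ≤ e :=
    fun v => le_csSup hbdd ⟨Gv v, hTfree v, rfl⟩
  -- colour set as finset
  set S : Finset ℕ := ((⊤ : SimpleGraph (Fin n)).edgeFinset).image c with hS
  have hSncard : (c '' (⊤ : SimpleGraph (Fin n)).edgeSet).ncard = S.card := by
    rw [hS, ← Set.ncard_coe_finset, Finset.coe_image, SimpleGraph.coe_edgeFinset]
  -- filter = Gv edgeSet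
  have hfilter : ∀ v : ℕ,
      ((((⊤ : SimpleGraph (Fin n)).edgeFinset).filter (fun x => c x = v))).card
        = ((Gv v).edgeSet).ncard := by
    intro v
    rw [← Set.ncard_coe_finset]
    congr 1
    ext x
    induction x with
    | _ a b =>
      simp only [Finset.coe_filter, Set.mem_setOf_eq, SimpleGraph.mem_edgeFinset,
        SimpleGraph.mem_edgeSet, SimpleGraph.top_adj]
      exact Iff.rfl
  -- counting
  have hcount : n.choose 2 ≤ S.card * e := by
    have hsubset : (⊤ : SimpleGraph (Fin n)).edgeFinset ⊆
        S.biUnion (fun v => ((⊤ : SimpleGraph (Fin n)).edgeFinset).filter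
          (fun x => c x = v)) := by
      intro x hx
      exact Finset.mem_biUnion.mpr ⟨c x, Finset.mem_image_of_mem c hx,
        Finset.mem_filter.mpr ⟨hx, rfl⟩⟩
    calc n.choose 2 = ((⊤ : SimpleGraph (Fin n)).edgeFinset).card := htopcard.symm
      _ ≤ (S.biUnion (fun v => ((⊤ : SimpleGraph (Fin n)).edgeFinset).filter
            (fun x => c x = v))).card := Finset.card_le_card hsubset
      _ ≤ ∑ v ∈ S, (((⊤ : SimpleGraph (Fin n)).edgeFinset).filter
            (fun x => c x = v)).card := Finset.card_biUnion_le
      _ ≤ ∑ _v ∈ S, e := by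
          refine Finset.sum_le_sum fun v _ => ?_
          rw [hfilter v]; exact hclass v
      _ = S.card * e := by rw [Finset.sum_const, smul_eq_mul]
  -- conclude
  rw [hSncard]
  rcases Nat.eq_zero_or_pos e with h0 | hpos
  · simp [h0]
  · rw [div_le_iff₀ (by exact_mod_cast hpos)]
    exact_mod_cast hcount
end

section
/- For every fixed even integer k ≥ 4, r(K_{n,n}, C_k, 3) ≥ n²/ex(n,n;P_k), and consequently r(K_{n,n}, C_k, 3) ≥ n/(k-2) + o(n). -/
open Finset

section EG
variable {V : Type*} [DecidableEq V] [Fintype V]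

/-- A path on `l` vertices for a relation, as an `ℕ`-indexed family. -/
def RelPath (A : V → V → Prop) (l : ℕ) : Prop :=
  ∃ p : ℕ → V, (∀ a b, a < l → b < l → p a = p b → a = b) ∧
    (∀ a, a + 1 < l → A (p a) (p (a + 1)))

lemma RelPath.mono {A : V → V → Prop} {l l' : ℕ} (h : RelPath A l) (hle : l' ≤ l) :
    RelPath A l' := by
  obtain ⟨p, h1, h2⟩ := h
  exact ⟨p, fun a b ha hb => h1 a b (lt_of_lt_of_le ha hle) (lt_of_lt_of_le hb hle),
    fun a ha => h2 a (lt_of_lt_of_le ha hle)⟩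

lemma mod_rot_inj {L j c d : ℕ} (hc : c < L) (hd : d < L)
    (h : (j + c) % L = (j + d) % L) : c = d := by
  have h2 : c ≡ d [MOD L] := Nat.ModEq.add_left_cancel' j h
  have h3 : c % L = d % L := h2
  rwa [Nat.mod_eq_of_lt hc, Nat.mod_eq_of_lt hd] at h3

lemma eg_core (k : ℕ) (hk : 3 ≤ k) (N : ℕ) :
    ∀ (s : Finset V) (A : V → V → Prop) (instA : DecidableRel A),
      s.card ≤ N →
      (∀ u y, A u y → A y u) →
      (∀ u, ¬ A u u) →
      (∀ u y, A u y → u ∈ s) →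
      ¬ RelPath A k →
      ∑ u ∈ s, (univ.filter (A u)).card ≤ (k - 2) * s.card := by
  induction N with
  | zero =>
    intro s A instA hs _ _ _ _
    have : s = ∅ := card_eq_zero.mp (Nat.le_zero.mp hs)
    simp [this]
  | succ N ih =>
    intro s A instA hs hsymm hirr hedge hnopath
    by_cases hx : ∃ x ∈ s, 2 * (univ.filter (A x)).card ≤ k - 2
    · obtain ⟨x, hxs, hxdeg⟩ := hx
      have hcard1 : 1 ≤ s.card := card_pos.mpr ⟨x, hxs⟩
      have hce : (s.erase x).card = s.card - 1 := card_erase_of_mem hxs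
      have h1 := ih (s.erase x) (fun a b => A a b ∧ a ≠ x ∧ b ≠ x)
        (fun a b => instDecidableAnd)
        (by omega)
        (fun u y h => ⟨hsymm _ _ h.1, h.2.2, h.2.1⟩)
        (fun u h => hirr u h.1)
        (fun u y h => mem_erase.mpr ⟨h.2.1, hedge u y h.1⟩)
        (fun ⟨p, hp1, hp2⟩ => hnopath ⟨p, hp1, fun a ha => (hp2 a ha).1⟩)
      have hdeg1 : ∀ u ∈ s.erase x,
          (univ.filter (A u)).card
            = (univ.filter (fun y => A u y ∧ u ≠ x ∧ y ≠ x)).card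
              + (if A u x then 1 else 0) := by
        intro u hu
        have hux : u ≠ x := (mem_erase.mp hu).1
        have hset : univ.filter (fun y => A u y ∧ u ≠ x ∧ y ≠ x)
            = (univ.filter (A u)).erase x := by
          ext y
          simp only [mem_erase, mem_filter, mem_univ, true_and]
          constructor
          · rintro ⟨h, -, h2⟩; exact ⟨h2, h⟩
          · rintro ⟨h2, h⟩; exact ⟨h, hux, h2⟩
        by_cases hAux : A u x
        · have hxmem : x ∈ univ.filter (A u) := by simp [hAux]
          have hpos : 0 < (univ.filter (A u)).card := card_pos.mpr ⟨x, hxmem⟩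
          rw [hset, card_erase_of_mem hxmem, if_pos hAux]
          omega
        · rw [hset, erase_eq_of_notMem (by simp [hAux]), if_neg hAux]
          omega
      have hsplit : ∑ u ∈ s, (univ.filter (A u)).card
          = (univ.filter (A x)).card + ∑ u ∈ s.erase x, (univ.filter (A u)).card :=
        (Finset.add_sum_erase s _ hxs).symm
      have hsum2 : ∑ u ∈ s.erase x, (univ.filter (A u)).card
          = (∑ u ∈ s.erase x, (univ.filter (fun y => A u y ∧ u ≠ x ∧ y ≠ x)).card)
            + ∑ u ∈ s.erase x, (if A u x then 1 else 0) := by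
        rw [← Finset.sum_add_distrib]
        exact Finset.sum_congr rfl hdeg1
      have hind : ∑ u ∈ s.erase x, (if A u x then 1 else 0)
          = ((s.erase x).filter (fun u => A u x)).card := (Finset.card_filter _ _).symm
      have hfil : (s.erase x).filter (fun u => A u x) = univ.filter (A x) := by
        ext u
        simp only [mem_filter, mem_erase, mem_univ, true_and]
        constructor
        · rintro ⟨-, h⟩; exact hsymm _ _ h
        · intro h
          have h' := hsymm _ _ h
          exact ⟨⟨fun he => hirr x (he ▸ h), hedge u x h'⟩, h'⟩
      calc ∑ u ∈ s, (univ.filter (A u)).card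
          = (univ.filter (A x)).card
            + ((∑ u ∈ s.erase x,
                (univ.filter (fun y => A u y ∧ u ≠ x ∧ y ≠ x)).card)
              + (univ.filter (A x)).card) := by rw [hsplit, hsum2, hind, hfil]
        _ = (∑ u ∈ s.erase x,
                (univ.filter (fun y => A u y ∧ u ≠ x ∧ y ≠ x)).card)
              + 2 * (univ.filter (A x)).card := by ring
        _ ≤ (k - 2) * (s.card - 1) + (k - 2) := by
            refine Nat.add_le_add ?_ hxdeg
            rw [hce] at h1; exact h1
        _ = (k - 2) * s.card := by
            obtain ⟨c, hc⟩ : ∃ c, s.card = c + 1 := ⟨s.card - 1, by omega⟩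
            rw [hc, Nat.add_sub_cancel]
            ring
    · push_neg at hx
      have hdeg : ∀ x ∈ s, k - 1 ≤ 2 * (univ.filter (A x)).card := by
        intro x hxs; have := hx x hxs; omega
      rcases s.eq_empty_or_nonempty with rfl | ⟨v₀, hv₀⟩
      · simp
      have hbdd : BddAbove {l | RelPath A l} := by
        refine ⟨Fintype.card V, fun l hl => ?_⟩
        obtain ⟨p, hp1, -⟩ := hl
        have hinj : Function.Injective (fun i : Fin l => p i) := by
          intro a b hab
          exact Fin.ext (hp1 a b a.isLt b.isLt hab)
        simpa using Fintype.card_le_of_injective _ hinj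
      have hne : (1 : ℕ) ∈ {l | RelPath A l} :=
        ⟨fun _ => v₀, fun a b ha hb _ => by omega, fun a ha => by omega⟩
      set L := sSup {l | RelPath A l} with hLdef
      have hL : RelPath A L := Nat.sSup_mem ⟨1, hne⟩ hbdd
      have hLmax : ¬ RelPath A (L + 1) := fun h => by
        have := le_csSup hbdd h
        omega
      have hLk : L ≤ k - 1 := by
        by_contra hcon
        exact hnopath (hL.mono (by omega))
      have hv₀deg : 0 < (univ.filter (A v₀)).card := by
        have := hdeg v₀ hv₀; omega
      obtain ⟨y₀, hy₀⟩ := card_pos.mp hv₀deg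
      have hy₀' : A v₀ y₀ := (mem_filter.mp hy₀).2
      have hL2 : 2 ≤ L := by
        refine le_csSup hbdd ⟨fun i => if i = 0 then v₀ else y₀, ?_, ?_⟩
        · intro a b ha hb hab
          have hne' : v₀ ≠ y₀ := fun h => hirr v₀ (by rw [← h] at hy₀'; exact hy₀')
          interval_cases a <;> interval_cases b <;> simp_all
        · intro a ha
          have ha0 : a = 0 := by omega
          subst ha0
          simpa using hy₀'
      obtain ⟨p, hpinj, hpadj⟩ := hL
      set S : Finset V := (Finset.range L).image p with hSdef
      have hpmemS : ∀ j, j < L → p j ∈ S := fun j hj => mem_image.mpr ⟨j, mem_range.mpr hj, rfl⟩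
      have hS0 : p 0 ∈ S := hpmemS 0 (by omega)
      have hSsub : S ⊆ s := by
        intro u hu
        obtain ⟨j, hj, rfl⟩ := mem_image.mp hu
        rw [mem_range] at hj
        rcases lt_or_ge (j + 1) L with h | h
        · exact hedge _ _ (hpadj j h)
        · have hadj : A (p (j - 1)) (p j) := by
            have h' := hpadj (j - 1) (by omega)
            have hji : j - 1 + 1 = j := by omega
            rwa [hji] at h'
          exact hedge _ _ (hsymm _ _ hadj)
      have hScard : S.card ≤ L := le_trans card_image_le (by simp)
      -- maximality: neighbours of the endpoints lie on the path
      have hfront : ∀ y, A (p 0) y → y ∈ S := by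
        intro y hy
        by_contra hyS
        refine hLmax ⟨fun t => if t = 0 then y else p (t - 1), ?_, ?_⟩
        · intro a b ha hb hab
          dsimp only at hab
          rcases Nat.eq_zero_or_pos a with rfl | hpa <;> rcases Nat.eq_zero_or_pos b with rfl | hpb
          · rfl
          · rw [if_pos rfl, if_neg (by omega)] at hab
            exact absurd (by rw [hab]; exact hpmemS (b - 1) (by omega)) hyS
          · rw [if_neg (by omega), if_pos rfl] at hab
            exact absurd (by rw [← hab]; exact hpmemS (a - 1) (by omega)) hyS
          · rw [if_neg (by omega), if_neg (by omega)] at hab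
            have := hpinj (a - 1) (b - 1) (by omega) (by omega) hab
            omega
        · intro a ha
          dsimp only
          rcases Nat.eq_zero_or_pos a with rfl | hpa
          · rw [if_pos rfl, if_neg (by omega : ¬0 + 1 = 0)]
            exact hsymm _ _ hy
          · rw [if_neg (by omega), if_neg (by omega)]
            have h' := hpadj (a - 1) (by omega)
            have hb : a - 1 + 1 = a := by omega
            rw [hb] at h'
            have hc : a + 1 - 1 = a := by omega
            rw [hc]
            exact h'
      have hback : ∀ y, A (p (L - 1)) y → y ∈ S := by
        intro y hy
        by_contra hyS
        refine hLmax ⟨fun t => if t < L then p t else y, ?_, ?_⟩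
        · intro a b ha hb hab
          dsimp only at hab
          rcases lt_or_ge a L with hpa | hpa <;> rcases lt_or_ge b L with hpb | hpb
          · rw [if_pos hpa, if_pos hpb] at hab
            exact hpinj a b hpa hpb hab
          · rw [if_pos hpa, if_neg (by omega)] at hab
            exact absurd (by rw [← hab]; exact hpmemS a hpa) hyS
          · rw [if_neg (by omega), if_pos hpb] at hab
            exact absurd (by rw [hab]; exact hpmemS b hpb) hyS
          · omega
        · intro a ha
          dsimp only
          rcases lt_or_ge (a + 1) L with h' | h'
          · rw [if_pos (by omega), if_pos h']
            exact hpadj a h'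
          · have haL : a = L - 1 := by omega
            rw [if_pos (by omega), if_neg (by omega)]
            rw [haL]
            exact hy
      -- the crossing indices
      have hAcard : ((Finset.range (L - 1)).filter (fun i => A (p 0) (p (i + 1)))).card
          = (univ.filter (A (p 0))).card := by
        apply Finset.card_bij (fun i _ => p (i + 1))
        · intro i hi
          simp only [mem_filter, mem_range] at hi
          simp [hi.2]
        · intro i hi j hj hij
          simp only [mem_filter, mem_range] at hi hj
          have := hpinj (i + 1) (j + 1) (by omega) (by omega) hij
          omega
        · intro y hy
          simp only [mem_filter, mem_univ, true_and] at hy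
          obtain ⟨t, ht, rfl⟩ := mem_image.mp (hfront y hy)
          rw [mem_range] at ht
          have ht0 : t ≠ 0 := fun h => hirr (p 0) (by rw [h] at hy; exact hy)
          refine ⟨t - 1, ?_, ?_⟩
          · simp only [mem_filter, mem_range]
            refine ⟨by omega, ?_⟩
            have hteq : t - 1 + 1 = t := by omega
            rw [hteq]
            exact hy
          · congr 1; omega
      have hBcard : ((Finset.range (L - 1)).filter (fun i => A (p (L - 1)) (p i))).card
          = (univ.filter (A (p (L - 1)))).card := by
        apply Finset.card_bij (fun i _ => p i)
        · intro i hi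
          simp only [mem_filter, mem_range] at hi
          simp [hi.2]
        · intro i hi j hj hij
          simp only [mem_filter, mem_range] at hi hj
          exact hpinj i j (by omega) (by omega) hij
        · intro y hy
          simp only [mem_filter, mem_univ, true_and] at hy
          obtain ⟨t, ht, rfl⟩ := mem_image.mp (hback y hy)
          rw [mem_range] at ht
          have htL : t ≠ L - 1 := fun h => hirr (p (L - 1)) (by rw [h] at hy; exact hy)
          exact ⟨t, by simp only [mem_filter, mem_range]; exact ⟨by omega, hy⟩, rfl⟩
      have hp0s : p 0 ∈ s := hSsub hS0
      have hpL1s : p (L - 1) ∈ s := hSsub (hpmemS (L - 1) (by omega))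
      have hABcard : 0 < (((Finset.range (L - 1)).filter (fun i => A (p 0) (p (i + 1))))
          ∩ ((Finset.range (L - 1)).filter (fun i => A (p (L - 1)) (p i)))).card := by
        have h1 := hdeg _ hp0s
        have h2 := hdeg _ hpL1s
        have hu : (((Finset.range (L - 1)).filter (fun i => A (p 0) (p (i + 1))))
            ∪ ((Finset.range (L - 1)).filter (fun i => A (p (L - 1)) (p i)))).card ≤ L - 1 := by
          refine le_trans (card_le_card (union_subset (filter_subset _ _) (filter_subset _ _))) ?_
          simp
        have hiu := Finset.card_inter_add_card_union
          ((Finset.range (L - 1)).filter (fun i => A (p 0) (p (i + 1))))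
          ((Finset.range (L - 1)).filter (fun i => A (p (L - 1)) (p i)))
        omega
      obtain ⟨i, hi⟩ := card_pos.mp hABcard
      rw [mem_inter, mem_filter, mem_filter, mem_range] at hi
      obtain ⟨⟨hiL, hA0⟩, -, hB0⟩ := hi
      -- the rotated cycle
      have hσlt : ∀ j, j < L → (if j ≤ i then j else L + i - j) < L := by
        intro j hj; split <;> omega
      have hσσ : ∀ j, j < L →
          (if (if j ≤ i then j else L + i - j) ≤ i then (if j ≤ i then j else L + i - j)
            else L + i - (if j ≤ i then j else L + i - j)) = j := by
        intro j hj
        by_cases h : j ≤ i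
        · simp [h]
        · rw [if_neg h, if_neg (by omega)]
          omega
      set w : ℕ → V := fun j => p (if j ≤ i then j else L + i - j) with hwdef
      have hwmemS : ∀ j, j < L → w j ∈ S := fun j hj => hpmemS _ (hσlt j hj)
      have hwinj : ∀ a b, a < L → b < L → w a = w b → a = b := by
        intro a b ha hb hab
        have h1 := hpinj _ _ (hσlt a ha) (hσlt b hb) hab
        have h2 := hσσ a ha
        have h3 := hσσ b hb
        rw [← h2, ← h3, h1]
      have hwsurj : ∀ u ∈ S, ∃ j, j < L ∧ w j = u := by
        intro u hu
        obtain ⟨t, ht, rfl⟩ := mem_image.mp hu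
        rw [mem_range] at ht
        refine ⟨if t ≤ i then t else L + i - t, hσlt t ht, ?_⟩
        simp only [hwdef]
        rw [hσσ t ht]
      have hcyc : ∀ j, j < L → A (w j) (w ((j + 1) % L)) := by
        intro j hj
        simp only [hwdef]
        rcases lt_trichotomy j i with h | rfl | h
        · have hmod : (j + 1) % L = j + 1 := Nat.mod_eq_of_lt (by omega)
          rw [hmod, if_pos (by omega), if_pos (by omega)]
          exact hpadj j (by omega)
        · have hmod : (j + 1) % L = j + 1 := Nat.mod_eq_of_lt (by omega)
          rw [hmod, if_pos le_rfl, if_neg (by omega)]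
          have heq : L + j - (j + 1) = L - 1 := by omega
          rw [heq]
          exact hsymm _ _ hB0
        · rcases Nat.lt_or_ge (j + 1) L with hjL | hjL
          · have hmod : (j + 1) % L = j + 1 := Nat.mod_eq_of_lt hjL
            rw [hmod, if_neg (by omega), if_neg (by omega)]
            have h' := hpadj (L + i - (j + 1)) (by omega)
            have heq : L + i - (j + 1) + 1 = L + i - j := by omega
            rw [heq] at h'
            exact hsymm _ _ h'
          · have hjeq : j + 1 = L := by omega
            have hmod : (j + 1) % L = 0 := by rw [hjeq, Nat.mod_self]
            rw [hmod, if_neg (by omega), if_pos (by omega)]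
            have heq : L + i - j = i + 1 := by omega
            rw [heq]
            exact hsymm _ _ hA0
      -- no edges leave S
      have hclose0 : ∀ y, y ∉ S → ∀ j, j < L → ¬ A (w j) y := by
        intro y hyS j hj hadj
        have hLpos : 0 < L := by omega
        refine hLmax ⟨fun t => if t = 0 then y else w ((j + (t - 1)) % L), ?_, ?_⟩
        · intro a b ha hb hab
          dsimp only at hab
          rcases Nat.eq_zero_or_pos a with rfl | hpa <;> rcases Nat.eq_zero_or_pos b with rfl | hpb
          · rfl
          · rw [if_pos rfl, if_neg (by omega)] at hab
            exact absurd (by rw [hab]; exact hwmemS _ (Nat.mod_lt _ hLpos)) hyS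
          · rw [if_neg (by omega), if_pos rfl] at hab
            exact absurd (by rw [← hab]; exact hwmemS _ (Nat.mod_lt _ hLpos)) hyS
          · rw [if_neg (by omega), if_neg (by omega)] at hab
            have h1 := hwinj _ _ (Nat.mod_lt _ hLpos) (Nat.mod_lt _ hLpos) hab
            have h2 := mod_rot_inj (L := L) (j := j) (c := a - 1) (d := b - 1)
              (by omega) (by omega) h1
            omega
        · intro a ha
          dsimp only
          rcases Nat.eq_zero_or_pos a with rfl | hpa
          · rw [if_pos rfl, if_neg (by omega : ¬0 + 1 = 0)]
            have heq : (j + (0 + 1 - 1)) % L = j := by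
              simp [Nat.mod_eq_of_lt hj]
            rw [heq]
            exact hsymm _ _ hadj
          · rw [if_neg (by omega), if_neg (by omega)]
            have h1 : (j + (a + 1 - 1)) % L = ((j + (a - 1)) % L + 1) % L := by
              rw [Nat.mod_add_mod]
              congr 1
              omega
            rw [h1]
            exact hcyc _ (Nat.mod_lt _ hLpos)
      have hclose : ∀ u ∈ S, ∀ y, A u y → y ∈ S := by
        intro u hu y hA'
        by_contra hyS
        obtain ⟨j, hj, rfl⟩ := hwsurj u hu
        exact hclose0 y hyS j hj hA'
      -- degrees inside S are at most k - 2
      have hdS : ∀ u ∈ S, (univ.filter (A u)).card ≤ k - 2 := by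
        intro u hu
        have hsub' : univ.filter (A u) ⊆ S.erase u := by
          intro y hy
          rw [mem_filter] at hy
          exact mem_erase.mpr ⟨fun h => hirr u (h ▸ hy.2), hclose u hu y hy.2⟩
        have h1 := card_le_card hsub'
        rw [card_erase_of_mem hu] at h1
        omega
      have hcardS1 : 1 ≤ S.card := card_pos.mpr ⟨p 0, hS0⟩
      have h2 := ih (s \ S) (fun a b => A a b ∧ a ∉ S ∧ b ∉ S)
        (fun a b => instDecidableAnd)
        (by
          rw [card_sdiff_of_subset hSsub]
          omega)
        (fun u y h => ⟨hsymm _ _ h.1, h.2.2, h.2.1⟩)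
        (fun u h => hirr u h.1)
        (fun u y h => mem_sdiff.mpr ⟨hedge u y h.1, h.2.1⟩)
        (fun ⟨q, hq1, hq2⟩ => hnopath ⟨q, hq1, fun a ha => (hq2 a ha).1⟩)
      have hdeq : ∀ u ∈ s \ S,
          (univ.filter (fun y => A u y ∧ u ∉ S ∧ y ∉ S)).card = (univ.filter (A u)).card := by
        intro u hu
        rw [mem_sdiff] at hu
        congr 1
        ext y
        simp only [mem_filter, mem_univ, true_and]
        constructor
        · exact fun h => h.1
        · intro h
          exact ⟨h, hu.2, fun hyS => hu.2 (hclose y hyS u (hsymm _ _ h))⟩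
      have hsplit := Finset.sum_sdiff (f := fun u => (univ.filter (A u)).card) hSsub
      have hS_le : ∑ u ∈ S, (univ.filter (A u)).card ≤ (k - 2) * S.card := by
        calc ∑ u ∈ S, (univ.filter (A u)).card ≤ ∑ _u ∈ S, (k - 2) := sum_le_sum hdS
          _ = (k - 2) * S.card := by rw [sum_const, smul_eq_mul, mul_comm]
      have hsd_le : ∑ u ∈ s \ S, (univ.filter (A u)).card ≤ (k - 2) * (s \ S).card := by
        calc ∑ u ∈ s \ S, (univ.filter (A u)).card
            = ∑ u ∈ s \ S, (univ.filter (fun y => A u y ∧ u ∉ S ∧ y ∉ S)).card :=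
              (sum_congr rfl hdeq).symm
          _ ≤ (k - 2) * (s \ S).card := h2
      have hSle : S.card ≤ s.card := card_le_card hSsub
      have hmul : (k - 2) * (s \ S).card + (k - 2) * S.card = (k - 2) * s.card := by
        rw [← Nat.mul_add, card_sdiff_of_subset hSsub]
        congr 1
        omega
      calc ∑ u ∈ s, (univ.filter (A u)).card
          = ∑ u ∈ s \ S, (univ.filter (A u)).card + ∑ u ∈ S, (univ.filter (A u)).card :=
            hsplit.symm
        _ ≤ (k - 2) * (s \ S).card + (k - 2) * S.card := Nat.add_le_add hsd_le hS_le
        _ = (k - 2) * s.card := hmul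

end EG


lemma relPath_iff_finPath {V : Type*} {k : ℕ} (hk : 1 ≤ k) (G : SimpleGraph V) :
    RelPath G.Adj k ↔ (∃ f : Fin k → V, Function.Injective f ∧
      ∀ a b, (SimpleGraph.pathGraph k).Adj a b → G.Adj (f a) (f b)) := by
  constructor
  · rintro ⟨p, h1, h2⟩
    refine ⟨fun i => p i, fun a b hab => Fin.ext (h1 a b a.isLt b.isLt hab), ?_⟩
    intro a b hab
    rw [SimpleGraph.pathGraph_adj] at hab
    rcases hab with h | h
    · have h' := h2 a.val (by omega)
      rw [h] at h'
      exact h'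
    · have h' := h2 b.val (by omega)
      rw [h] at h'
      exact h'.symm
  · rintro ⟨f, hfi, hfa⟩
    refine ⟨fun i => if h : i < k then f ⟨i, h⟩ else f ⟨0, by omega⟩, ?_, ?_⟩
    · intro a b ha hb hab
      dsimp only at hab
      rw [dif_pos ha, dif_pos hb] at hab
      exact congrArg Fin.val (hfi hab)
    · intro a ha
      dsimp only
      rw [dif_pos (by omega : a < k), dif_pos ha]
      exact hfa _ _ (SimpleGraph.pathGraph_adj.mpr (Or.inl rfl))

lemma eg_main {V : Type*} [DecidableEq V] [Fintype V] {k : ℕ} (hk : 3 ≤ k) (G : SimpleGraph V)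
    (hG : ¬ ∃ f : Fin k → V, Function.Injective f ∧
      ∀ a b, (SimpleGraph.pathGraph k).Adj a b → G.Adj (f a) (f b)) :
    2 * G.edgeSet.ncard ≤ (k - 2) * Fintype.card V := by
  classical
  have hrel : ¬ RelPath G.Adj k := fun hr => hG ((relPath_iff_finPath (by omega) G).mp hr)
  have h := eg_core k hk (Fintype.card V) Finset.univ G.Adj (Classical.decRel _)
    (by simp) (fun u y h => h.symm) (fun u => G.loopless.irrefl u) (fun u y _ => Finset.mem_univ u)
    hrel
  have hdeg : ∀ u, (univ.filter (G.Adj u)).card = G.degree u := by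
    intro u
    rw [SimpleGraph.degree, SimpleGraph.neighborFinset_eq_filter]
  have hhs : ∑ u, G.degree u = 2 * G.edgeFinset.card := G.sum_degrees_eq_twice_card_edges
  have hcard : G.edgeSet.ncard = G.edgeFinset.card := by
    rw [Set.ncard_eq_toFinset_card']
    exact congrArg Finset.card (Finset.ext fun e => by simp)
  rw [hcard, ← hhs]
  calc ∑ u, G.degree u
      = ∑ u ∈ univ, (univ.filter (G.Adj u)).card :=
        Finset.sum_congr rfl (fun u _ => (hdeg u).symm)
    _ ≤ (k - 2) * Finset.univ.card := h
    _ = (k - 2) * Fintype.card V := by rw [Finset.card_univ]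

lemma sides_of_adj {n : ℕ} {x y : Fin n ⊕ Fin n}
    (h : (completeBipartiteGraph (Fin n) (Fin n)).Adj x y) : y.isLeft = !x.isLeft := by
  rcases x with x | x <;> rcases y with y | y <;> simp_all [completeBipartiteGraph]

lemma adj_of_sides {n : ℕ} {x y : Fin n ⊕ Fin n} (h : y.isLeft = !x.isLeft) :
    (completeBipartiteGraph (Fin n) (Fin n)).Adj x y := by
  rcases x with x | x <;> rcases y with y | y <;> simp_all [completeBipartiteGraph]

lemma K_edge_card (n : ℕ) [Fintype (completeBipartiteGraph (Fin n) (Fin n)).edgeSet] :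
    (completeBipartiteGraph (Fin n) (Fin n)).edgeFinset.card = n * n := by
  classical
  have himg : (completeBipartiteGraph (Fin n) (Fin n)).edgeFinset
      = (Finset.univ : Finset (Fin n × Fin n)).image
          (fun p => s(Sum.inl p.1, Sum.inr p.2)) := by
    ext e
    refine Sym2.ind (fun x y => ?_) e
    rw [SimpleGraph.mem_edgeFinset, SimpleGraph.mem_edgeSet, Finset.mem_image]
    constructor
    · intro h
      rcases x with a | a <;> rcases y with b | b <;>
        simp only [completeBipartiteGraph_adj, Sum.isLeft_inl, Sum.isRight_inr,
          Sum.isLeft_inr, Sum.isRight_inl] at h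
      · simp at h
      · exact ⟨(a, b), Finset.mem_univ _, rfl⟩
      · exact ⟨(b, a), Finset.mem_univ _, Sym2.eq_swap⟩
      · simp at h
    · rintro ⟨p, -, hp⟩
      rw [← SimpleGraph.mem_edgeSet, ← hp]
      simp [completeBipartiteGraph]
  rw [himg, Finset.card_image_of_injective _ ?_, Finset.card_univ, Fintype.card_prod,
    Fintype.card_fin]
  intro p q hpq
  rw [Sym2.eq_iff] at hpq
  rcases hpq with ⟨h1, h2⟩ | ⟨h1, h2⟩
  · exact Prod.ext (Sum.inl_injective h1) (Sum.inr_injective h2)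
  · exact absurd h1 (by simp)

/-- `r(K_{n,n}, C_k, 3)`: minimum number of colours in an edge-colouring of the complete
bipartite graph `K_{n,n}` such that every copy of the cycle `C_k` receives at least
3 colours. -/
noncomputable def rKnnCk (k n : ℕ) : ℕ :=
  sInf {m : ℕ | ∃ c : Sym2 (Fin n ⊕ Fin n) → Fin m,
    ∀ v : ZMod k → Fin n ⊕ Fin n, Function.Injective v →
      (∀ i, (completeBipartiteGraph (Fin n) (Fin n)).Adj (v i) (v (i + 1))) →
      3 ≤ (Set.range fun i : ZMod k => c s(v i, v (i + 1))).ncard}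

/-- `ex(n,n;P_k)`: maximum number of edges of a subgraph of `K_{n,n}` with no copy of the
path on `k` vertices. -/
noncomputable def exKnnPk (k n : ℕ) : ℕ :=
  sSup {e : ℕ | ∃ G : SimpleGraph (Fin n ⊕ Fin n),
    G ≤ completeBipartiteGraph (Fin n) (Fin n) ∧
    (¬ ∃ f : Fin k → Fin n ⊕ Fin n, Function.Injective f ∧
      ∀ a b, (SimpleGraph.pathGraph k).Adj a b → G.Adj (f a) (f b)) ∧
    e = G.edgeSet.ncard}



lemma exKnnPk_bddAbove (k n : ℕ) : BddAbove {e : ℕ | ∃ G : SimpleGraph (Fin n ⊕ Fin n),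
    G ≤ completeBipartiteGraph (Fin n) (Fin n) ∧
    (¬ ∃ f : Fin k → Fin n ⊕ Fin n, Function.Injective f ∧
      ∀ a b, (SimpleGraph.pathGraph k).Adj a b → G.Adj (f a) (f b)) ∧
    e = G.edgeSet.ncard} := by
  refine ⟨Fintype.card (Sym2 (Fin n ⊕ Fin n)), ?_⟩
  rintro e ⟨G, -, -, rfl⟩
  calc G.edgeSet.ncard ≤ (Set.univ : Set (Sym2 (Fin n ⊕ Fin n))).ncard :=
        Set.ncard_le_ncard (Set.subset_univ _) Set.finite_univ
    _ = Fintype.card (Sym2 (Fin n ⊕ Fin n)) := by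
        rw [Set.ncard_univ, Nat.card_eq_fintype_card]

lemma rKnn_set_nonempty (k n : ℕ) (hk : 4 ≤ k) :
    {m : ℕ | ∃ c : Sym2 (Fin n ⊕ Fin n) → Fin m,
    ∀ v : ZMod k → Fin n ⊕ Fin n, Function.Injective v →
      (∀ i, (completeBipartiteGraph (Fin n) (Fin n)).Adj (v i) (v (i + 1))) →
      3 ≤ (Set.range fun i : ZMod k => c s(v i, v (i + 1))).ncard}.Nonempty := by
  haveI : NeZero k := ⟨by omega⟩
  refine ⟨Fintype.card (Sym2 (Fin n ⊕ Fin n)), Fintype.equivFin _, ?_⟩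
  intro v hv hadj
  have hinj : Function.Injective (fun i : ZMod k => s(v i, v (i + 1))) := by
    intro i j hij
    dsimp only at hij
    rw [Sym2.eq_iff] at hij
    rcases hij with ⟨h1, -⟩ | ⟨h1, h2⟩
    · exact hv h1
    · exfalso
      have hji : j = i + 1 := hv h2.symm
      have hij' : i = j + 1 := hv h1
      have h20 : (2 : ZMod k) = 0 := by
        have : i + 0 = i + 2 := by
          rw [add_zero]
          calc i = j + 1 := hij'
            _ = (i + 1) + 1 := by rw [hji]
            _ = i + 2 := by ring
        have := add_left_cancel this
        exact this.symm
      have hval : ((2 : ℕ) : ZMod k).val = 2 := ZMod.val_cast_of_lt (by omega)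
      rw [show ((2 : ℕ) : ZMod k) = (2 : ZMod k) by push_cast; ring, h20, ZMod.val_zero] at hval
      omega
  have hginj : Function.Injective
      (fun i : ZMod k => (Fintype.equivFin (Sym2 (Fin n ⊕ Fin n))) s(v i, v (i + 1))) :=
    (Fintype.equivFin _).injective.comp hinj
  have hcard : (Set.range fun i : ZMod k =>
      (Fintype.equivFin (Sym2 (Fin n ⊕ Fin n))) s(v i, v (i + 1))).ncard = k := by
    rw [← Nat.card_coe_set_eq, Nat.card_range_of_injective hginj,
      Nat.card_eq_fintype_card, ZMod.card]
  omega

lemma key1 (k n : ℕ) (hk : 4 ≤ k) (hke : Even k) :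
    n * n ≤ rKnnCk k n * exKnnPk k n := by
  classical
  haveI : NeZero k := ⟨by omega⟩
  haveI : Fact (1 < k) := ⟨by omega⟩
  set K := completeBipartiteGraph (Fin n) (Fin n) with hKdef
  obtain ⟨c, hc⟩ := Nat.sInf_mem (rKnn_set_nonempty k n hk)
  set r := rKnnCk k n with hrdef
  -- colour classes
  set Gj : Fin r → SimpleGraph (Fin n ⊕ Fin n) := fun j =>
    { Adj := fun a b => K.Adj a b ∧ c s(a, b) = j
      symm := by
        constructor
        intro a b h
        refine ⟨h.1.symm, ?_⟩
        rw [Sym2.eq_swap]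
        exact h.2
      loopless := ⟨fun a h => K.loopless.irrefl a h.1⟩ } with hGjdef
  -- each colour class is P_k-free
  have hfree : ∀ j, ¬ ∃ f : Fin k → Fin n ⊕ Fin n, Function.Injective f ∧
      ∀ a b, (SimpleGraph.pathGraph k).Adj a b → (Gj j).Adj (f a) (f b) := by
    rintro j ⟨f, hfi, hfa⟩
    have hk0 : 0 < k := by omega
    have hcons : ∀ a : ℕ, (h : a + 1 < k) →
        (Gj j).Adj (f ⟨a, by omega⟩) (f ⟨a + 1, h⟩) := by
      intro a h
      exact hfa _ _ (SimpleGraph.pathGraph_adj.mpr (Or.inl rfl))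
    have hpar : ∀ a, (h : a < k) → (f ⟨a, h⟩).isLeft =
        (if a % 2 = 0 then (f ⟨0, hk0⟩).isLeft else !(f ⟨0, hk0⟩).isLeft) := by
      intro a
      induction a with
      | zero => intro h; simp
      | succ a iha =>
        intro h
        have h' : a < k := by omega
        have hstep : (f ⟨a + 1, h⟩).isLeft = !(f ⟨a, h'⟩).isLeft :=
          sides_of_adj (hcons a h).1
        rw [hstep, iha h']
        by_cases hpar2 : a % 2 = 0
        · rw [if_pos hpar2, if_neg (by omega)]
        · rw [if_neg hpar2, if_pos (by omega), Bool.not_not]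
    have hkm : k % 2 = 0 := Nat.even_iff.mp hke
    have hlast : (f ⟨k - 1, by omega⟩).isLeft = !(f ⟨0, hk0⟩).isLeft := by
      rw [hpar (k - 1) (by omega), if_neg (by omega)]
    have hclosing : K.Adj (f ⟨k - 1, by omega⟩) (f ⟨0, hk0⟩) := by
      apply adj_of_sides
      rw [hlast, Bool.not_not]
    -- build the cycle
    set v : ZMod k → Fin n ⊕ Fin n := fun i => f ⟨i.val, ZMod.val_lt i⟩ with hvdef
    have hvinj : Function.Injective v := by
      intro i j hij
      have := hfi hij
      exact ZMod.val_injective k (congrArg Fin.val this)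
    have hval1 : ∀ i : ZMod k, (i + 1).val = (i.val + 1) % k := by
      intro i
      rw [ZMod.val_add, ZMod.val_one]
    have hvadj : ∀ i, K.Adj (v i) (v (i + 1)) := by
      intro i
      rcases lt_or_ge (i.val + 1) k with hlt | hge
      · have hfin : (⟨(i + 1).val, ZMod.val_lt _⟩ : Fin k) = ⟨i.val + 1, hlt⟩ :=
          Fin.ext (by show (i + 1).val = i.val + 1; rw [hval1]; exact Nat.mod_eq_of_lt hlt)
        have := (hcons i.val hlt).1
        simp only [hvdef, hfin]
        exact this
      · have hival : i.val = k - 1 := by have := ZMod.val_lt i; omega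
        have hfin : (⟨(i + 1).val, ZMod.val_lt _⟩ : Fin k) = ⟨0, hk0⟩ :=
          Fin.ext (by
            show (i + 1).val = 0
            rw [hval1]
            have hik : i.val + 1 = k := by omega
            rw [hik, Nat.mod_self])
        have hfin2 : (⟨i.val, ZMod.val_lt i⟩ : Fin k) = ⟨k - 1, by omega⟩ :=
          Fin.ext hival
        simp only [hvdef, hfin, hfin2]
        exact hclosing
    have h3 := hc v hvinj hvadj
    have hsub : (Set.range fun i : ZMod k => c s(v i, v (i + 1))) ⊆
        {j, c s(f ⟨k - 1, by omega⟩, f ⟨0, hk0⟩)} := by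
      rintro x ⟨i, rfl⟩
      rcases lt_or_ge (i.val + 1) k with hlt | hge
      · have hfin : (⟨(i + 1).val, ZMod.val_lt _⟩ : Fin k) = ⟨i.val + 1, hlt⟩ :=
          Fin.ext (by show (i + 1).val = i.val + 1; rw [hval1]; exact Nat.mod_eq_of_lt hlt)
        left
        have := (hcons i.val hlt).2
        simp only [hvdef, hfin]
        exact this
      · have hival : i.val = k - 1 := by have := ZMod.val_lt i; omega
        have hfin : (⟨(i + 1).val, ZMod.val_lt _⟩ : Fin k) = ⟨0, hk0⟩ :=
          Fin.ext (by
            show (i + 1).val = 0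
            rw [hval1]
            have hik : i.val + 1 = k := by omega
            rw [hik, Nat.mod_self])
        have hfin2 : (⟨i.val, ZMod.val_lt i⟩ : Fin k) = ⟨k - 1, by omega⟩ :=
          Fin.ext hival
        right
        simp only [hvdef, hfin, hfin2]
        rfl
    have h2 : (Set.range fun i : ZMod k => c s(v i, v (i + 1))).ncard ≤ 2 := by
      calc (Set.range fun i : ZMod k => c s(v i, v (i + 1))).ncard
          ≤ ({j, c s(f ⟨k - 1, by omega⟩, f ⟨0, hk0⟩)} : Set (Fin r)).ncard :=
            Set.ncard_le_ncard hsub (Set.toFinite _)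
        _ ≤ 2 := le_trans (Set.ncard_insert_le _ _) (by exact Nat.add_le_add_right (Set.ncard_singleton _).le 1)
    omega
  -- counting
  have hGjEdge : ∀ j, (Gj j).edgeFinset = K.edgeFinset.filter (fun e => c e = j) := by
    intro j
    ext e
    refine Sym2.ind (fun x y => ?_) e
    rw [SimpleGraph.mem_edgeFinset, Finset.mem_filter, SimpleGraph.mem_edgeFinset,
      SimpleGraph.mem_edgeSet, SimpleGraph.mem_edgeSet]
  have hfib : K.edgeFinset.card = ∑ j : Fin r, (K.edgeFinset.filter (fun e => c e = j)).card :=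
    by rw [Finset.card_eq_sum_card_fiberwise (s := K.edgeFinset) (f := c) (t := univ) (fun e _ => Finset.mem_univ _)]; apply Finset.sum_congr rfl; intro j _; congr 1; ext e; simp
  have hGle : ∀ j : Fin r, (K.edgeFinset.filter (fun e => c e = j)).card ≤ exKnnPk k n := by
    intro j
    rw [← hGjEdge]
    refine le_csSup (exKnnPk_bddAbove k n) ⟨Gj j, fun a b h => h.1, hfree j, ?_⟩
    rw [Set.ncard_eq_toFinset_card']
    exact congrArg Finset.card (Finset.ext fun e => by simp)
  calc n * n = K.edgeFinset.card := (K_edge_card n).symm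
    _ = ∑ j : Fin r, (K.edgeFinset.filter (fun e => c e = j)).card := hfib
    _ ≤ ∑ _j : Fin r, exKnnPk k n := Finset.sum_le_sum (fun j _ => hGle j)
    _ = r * exKnnPk k n := by rw [Finset.sum_const, Finset.card_univ, Fintype.card_fin,
        smul_eq_mul]

lemma exLe (k n : ℕ) (hk : 4 ≤ k) : exKnnPk k n ≤ (k - 2) * n := by
  classical
  refine csSup_le ⟨0, ⊥, bot_le, ?_, by simp⟩ ?_
  · rintro ⟨f, -, hfa⟩
    exact absurd (hfa ⟨0, by omega⟩ ⟨1, by omega⟩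
      (SimpleGraph.pathGraph_adj.mpr (Or.inl rfl))) (by simp)
  · rintro e ⟨G, -, hfree, rfl⟩
    have h := eg_main (by omega : 3 ≤ k) G hfree
    have hcV : Fintype.card (Fin n ⊕ Fin n) = n + n := by simp
    rw [hcV] at h
    have h2 : 2 * G.edgeSet.ncard ≤ 2 * ((k - 2) * n) := by
      calc 2 * G.edgeSet.ncard ≤ (k - 2) * (n + n) := h
        _ = 2 * ((k - 2) * n) := by ring
    exact Nat.le_of_mul_le_mul_left h2 (by norm_num)

theorem stmt_6 (k : ℕ) (hk : 4 ≤ k) (hke : Even k) :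
    (∀ n : ℕ, ((n : ℝ)) ^ 2 / (exKnnPk k n : ℝ) ≤ (rKnnCk k n : ℝ)) ∧
    ∃ f : ℕ → ℝ, f =o[Filter.atTop] (fun n => (n : ℝ)) ∧
      ∀ n : ℕ, (n : ℝ) / ((k : ℝ) - 2) + f n ≤ (rKnnCk k n : ℝ) := by

  constructor
  · intro n
    have hkey := key1 k n hk hke
    by_cases hex : exKnnPk k n = 0
    · have hn : n = 0 := by
        rw [hex, mul_zero] at hkey
        have h0 : n * n = 0 := Nat.le_zero.mp hkey
        rcases Nat.mul_eq_zero.mp h0 with h | h <;> exact h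
      subst hn
      simp
    · have hexpos : (0 : ℝ) < exKnnPk k n := by
        exact_mod_cast Nat.pos_of_ne_zero hex
      rw [div_le_iff₀ hexpos]
      calc ((n : ℝ)) ^ 2 = ((n * n : ℕ) : ℝ) := by push_cast; ring
        _ ≤ ((rKnnCk k n * exKnnPk k n : ℕ) : ℝ) := Nat.cast_le.mpr hkey
        _ = (rKnnCk k n : ℝ) * (exKnnPk k n : ℝ) := by push_cast; ring
  · refine ⟨fun _ => 0, Asymptotics.isLittleO_zero _ _, ?_⟩
    intro n
    rw [add_zero]
    have hkey := key1 k n hk hke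
    have hexle := exLe k n hk
    have h1 : n * n ≤ rKnnCk k n * ((k - 2) * n) :=
      le_trans hkey (Nat.mul_le_mul_left _ hexle)
    have h2 : n ≤ rKnnCk k n * (k - 2) := by
      rcases Nat.eq_zero_or_pos n with rfl | hn
      · simp
      · rw [show rKnnCk k n * ((k - 2) * n) = rKnnCk k n * (k - 2) * n by ring] at h1
        exact Nat.le_of_mul_le_mul_right h1 hn
    have hk2 : (0 : ℝ) < (k : ℝ) - 2 := by
      have : (4 : ℝ) ≤ (k : ℝ) := by exact_mod_cast hk
      linarith
    rw [div_le_iff₀ hk2]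
    calc (n : ℝ) ≤ ((rKnnCk k n * (k - 2) : ℕ) : ℝ) := Nat.cast_le.mpr h2
      _ = (rKnnCk k n : ℝ) * ((k : ℝ) - 2) := by
          push_cast [Nat.cast_sub (by omega : 2 ≤ k)]
          ring
end

section
/- Let E_1,...,E_n be events on a probability space with dependency graph G (so each E_i is mutually independent of all events not adjacent to it in G). If there exist x_1,...,x_n ∈ (0,1) such that for every i, P(E_i) ≤ x_i ∏_{j: E_j ∈ N_G(E_i)} (1 - x_j), then P(⋂_{i=1}^n complement of E_i) > 0. -/
open MeasureTheory

/-- Asymmetric Lovász Local Lemma. -/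
theorem stmt_8 {Ω : Type*} [MeasurableSpace Ω] (μ : Measure Ω) [IsProbabilityMeasure μ]
    (n : ℕ) (E : Fin n → Set Ω) (hE : ∀ i, MeasurableSet (E i))
    (G : SimpleGraph (Fin n)) [DecidableRel G.Adj]
    -- each `E i` is mutually independent of the collection of events not adjacent to it
    (hind : ∀ i : Fin n, ∀ S T : Finset (Fin n),
      (∀ j ∈ S, j ≠ i ∧ ¬ G.Adj i j) → (∀ j ∈ T, j ≠ i ∧ ¬ G.Adj i j) → Disjoint S T →
      μ (E i ∩ ((⋂ j ∈ S, E j) ∩ ⋂ j ∈ T, (E j)ᶜ)) =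
        μ (E i) * μ ((⋂ j ∈ S, E j) ∩ ⋂ j ∈ T, (E j)ᶜ))
    (x : Fin n → ENNReal) (hx0 : ∀ i, 0 < x i) (hx1 : ∀ i, x i < 1)
    (hP : ∀ i, μ (E i) ≤ x i * ∏ j ∈ G.neighborFinset i, (1 - x j)) :
    0 < μ (⋂ i, (E i)ᶜ) := by
  -- Peeling lemma: assuming the main claim for all sets of size < k,
  -- μ (⋂_{T ∪ U} Eⱼᶜ) ≥ (∏_{j ∈ T} (1 - x j)) * μ (⋂_U Eⱼᶜ).
  have peel : ∀ k : ℕ,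
      (∀ S : Finset (Fin n), S.card < k → ∀ i ∉ S,
        μ (E i ∩ ⋂ j ∈ S, (E j)ᶜ) ≤ x i * μ (⋂ j ∈ S, (E j)ᶜ)) →
      ∀ T U : Finset (Fin n), Disjoint T U → (T ∪ U).card ≤ k →
      (∏ j ∈ T, (1 - x j)) * μ (⋂ j ∈ U, (E j)ᶜ) ≤ μ (⋂ j ∈ T ∪ U, (E j)ᶜ) := by
    intro k H T
    induction T using Finset.induction with
    | empty => intro U _ _; simp
    | @insert a T' ha IH =>
      intro U hdisj hcard
      have haU : a ∉ U := Finset.disjoint_left.mp hdisj (Finset.mem_insert_self a T')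
      have haTU : a ∉ T' ∪ U := by
        simp only [Finset.mem_union]
        rintro (h | h)
        · exact ha h
        · exact haU h
      have hdisj' : Disjoint T' U := hdisj.mono_left (Finset.subset_insert a T')
      have hins : insert a T' ∪ U = insert a (T' ∪ U) := by
        rw [Finset.insert_union]
      have hcard' : (T' ∪ U).card < k := by
        have h1 : (insert a (T' ∪ U)).card = (T' ∪ U).card + 1 :=
          Finset.card_insert_of_notMem haTU
        rw [hins] at hcard
        omega
      set C : Set Ω := ⋂ j ∈ T' ∪ U, (E j)ᶜ with hC
      have hCmeas : MeasurableSet C :=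
        Finset.measurableSet_biInter _ (fun j _ => (hE j).compl)
      have hsplit : (⋂ j ∈ insert a T' ∪ U, (E j)ᶜ) = C ∩ (E a)ᶜ := by
        rw [hins, Finset.set_biInter_insert, Set.inter_comm]
      have hdiff : μ (C ∩ (E a)ᶜ) = μ C - μ (C ∩ E a) := by
        have h1 : C ∩ (E a)ᶜ = C \ (C ∩ E a) := by
          rw [Set.diff_self_inter, Set.diff_eq]
        rw [h1, measure_diff Set.inter_subset_left
          ((hCmeas.inter (hE a)).nullMeasurableSet) (measure_ne_top μ _)]
      have hclaim : μ (E a ∩ C) ≤ x a * μ C := H (T' ∪ U) hcard' a haTU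
      have hstep : (1 - x a) * μ C ≤ μ (C ∩ (E a)ᶜ) := by
        rw [hdiff]
        calc (1 - x a) * μ C = 1 * μ C - x a * μ C := by
              rw [ENNReal.sub_mul]
              intro _ _; exact measure_ne_top μ _
          _ = μ C - x a * μ C := by rw [one_mul]
          _ ≤ μ C - μ (E a ∩ C) := by
              exact tsub_le_tsub_left hclaim _
          _ = μ C - μ (C ∩ E a) := by rw [Set.inter_comm]
      rw [hsplit, Finset.prod_insert ha]
      calc ((1 - x a) * ∏ j ∈ T', (1 - x j)) * μ (⋂ j ∈ U, (E j)ᶜ)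
          = (1 - x a) * ((∏ j ∈ T', (1 - x j)) * μ (⋂ j ∈ U, (E j)ᶜ)) := by ring
        _ ≤ (1 - x a) * μ C := mul_le_mul_right (IH U hdisj' hcard'.le) _
        _ ≤ μ (C ∩ (E a)ᶜ) := hstep
  -- Main claim by strong induction on the cardinality bound.
  have claim : ∀ m : ℕ, ∀ S : Finset (Fin n), S.card ≤ m → ∀ i ∉ S,
      μ (E i ∩ ⋂ j ∈ S, (E j)ᶜ) ≤ x i * μ (⋂ j ∈ S, (E j)ᶜ) := by
    intro m
    induction m using Nat.strong_induction_on with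
    | _ m IH =>
      intro S hSm i hiS
      have H : ∀ S' : Finset (Fin n), S'.card < S.card → ∀ i' ∉ S',
          μ (E i' ∩ ⋂ j ∈ S', (E j)ᶜ) ≤ x i' * μ (⋂ j ∈ S', (E j)ᶜ) := by
        intro S' hlt i' hi'
        exact IH S'.card (lt_of_lt_of_le hlt hSm) S' le_rfl i' hi'
      set S₁ : Finset (Fin n) := S ∩ G.neighborFinset i with hS₁
      set S₂ : Finset (Fin n) := S \ G.neighborFinset i with hS₂
      have hunion : S₁ ∪ S₂ = S := by
        rw [hS₁, hS₂]; ext j; simp only [Finset.mem_union, Finset.mem_inter,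
          Finset.mem_sdiff]; tauto
      have hdisj : Disjoint S₁ S₂ :=
        Finset.disjoint_of_subset_left Finset.inter_subset_right Finset.disjoint_sdiff
      have hS₂sub : S₂ ⊆ S := Finset.sdiff_subset
      have hS₂cond : ∀ j ∈ S₂, j ≠ i ∧ ¬ G.Adj i j := by
        intro j hj
        rw [hS₂, Finset.mem_sdiff] at hj
        refine ⟨fun h => hiS (h ▸ hj.1), fun h => hj.2 ?_⟩
        rw [SimpleGraph.mem_neighborFinset]; exact h
      have hind2 : μ (E i ∩ ⋂ j ∈ S₂, (E j)ᶜ) = μ (E i) * μ (⋂ j ∈ S₂, (E j)ᶜ) := by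
        have := hind i ∅ S₂ (by simp) hS₂cond (Finset.disjoint_empty_left _)
        simpa using this
      have hmono : μ (E i ∩ ⋂ j ∈ S, (E j)ᶜ) ≤ μ (E i ∩ ⋂ j ∈ S₂, (E j)ᶜ) := by
        apply measure_mono
        apply Set.inter_subset_inter_right
        exact Set.biInter_mono (by exact_mod_cast hS₂sub) (fun j _ => le_rfl)
      have hprodle : (∏ j ∈ G.neighborFinset i, (1 - x j)) ≤ ∏ j ∈ S₁, (1 - x j) := by
        have hsub : S₁ ⊆ G.neighborFinset i := Finset.inter_subset_right
        calc ∏ j ∈ G.neighborFinset i, (1 - x j)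
            = (∏ j ∈ G.neighborFinset i \ S₁, (1 - x j)) * ∏ j ∈ S₁, (1 - x j) :=
              (Finset.prod_sdiff hsub).symm
          _ ≤ 1 * ∏ j ∈ S₁, (1 - x j) := by
              gcongr
              exact Finset.prod_le_one (fun _ _ => zero_le) (fun j _ => tsub_le_self)
          _ = ∏ j ∈ S₁, (1 - x j) := one_mul _
      have hpeel : (∏ j ∈ S₁, (1 - x j)) * μ (⋂ j ∈ S₂, (E j)ᶜ) ≤ μ (⋂ j ∈ S, (E j)ᶜ) := by
        have hS₁sub : S₁ ⊆ S := Finset.inter_subset_left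
        have := peel S.card
          (fun S' h i' hi' => H S' h i' hi') S₁ S₂ hdisj (by rw [hunion])
        rwa [hunion] at this
      calc μ (E i ∩ ⋂ j ∈ S, (E j)ᶜ)
          ≤ μ (E i ∩ ⋂ j ∈ S₂, (E j)ᶜ) := hmono
        _ = μ (E i) * μ (⋂ j ∈ S₂, (E j)ᶜ) := hind2
        _ ≤ (x i * ∏ j ∈ G.neighborFinset i, (1 - x j)) * μ (⋂ j ∈ S₂, (E j)ᶜ) :=
            mul_le_mul_left (hP i) _
        _ ≤ (x i * ∏ j ∈ S₁, (1 - x j)) * μ (⋂ j ∈ S₂, (E j)ᶜ) :=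
            mul_le_mul_left (mul_le_mul_right hprodle _) _
        _ = x i * ((∏ j ∈ S₁, (1 - x j)) * μ (⋂ j ∈ S₂, (E j)ᶜ)) := by ring
        _ ≤ x i * μ (⋂ j ∈ S, (E j)ᶜ) := mul_le_mul_right hpeel _
  -- Conclude.
  have hfin : (∏ j ∈ (Finset.univ : Finset (Fin n)), (1 - x j)) * μ (⋂ j ∈ (∅ : Finset (Fin n)), (E j)ᶜ)
      ≤ μ (⋂ j ∈ (Finset.univ ∪ ∅ : Finset (Fin n)), (E j)ᶜ) := by
    exact peel n (fun S' h i' hi' => claim S'.card S' le_rfl i' hi') Finset.univ ∅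
      (Finset.disjoint_empty_right _) (by simp)
  have hprodpos : 0 < ∏ j ∈ (Finset.univ : Finset (Fin n)), (1 - x j) := by
    apply CanonicallyOrderedAdd.prod_pos.mpr
    intro j _
    exact tsub_pos_of_lt (hx1 j)
  have heq : (⋂ i, (E i)ᶜ) = ⋂ j ∈ (Finset.univ ∪ ∅ : Finset (Fin n)), (E j)ᶜ := by
    simp
  rw [heq]
  refine lt_of_lt_of_le ?_ hfin
  simp only [Finset.notMem_empty, Set.iInter_of_empty, Set.iInter_univ, measure_univ, mul_one]
  exact hprodpos
end

section
/- Let k ≥ 3, let G be an edge-coloured graph in which every colour class is a vertex-disjoint union of copies of K_{k-1}, and suppose that for every pair of colours i, j the (k-1)-uniform hypergraph whose edges are the vertex sets of monochromatic copies of K_{k-1} in colours i or j has no cycle of length at most 2⌊ℓ/2⌋ (in the Berge sense: a sequence of ≥2 distinct hyperedges e_1,...,e_t and distinct vertices v_1,...,v_t with e_s ∩ e_{s+1} ∋ v_s, indices mod t). Then every cycle in G of length h with k ≤ h ≤ ℓ receives at least 3 colours. -/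
section aux

variable {V : Type*} [DecidableEq V]

/-- Shortening lemma: any closed Berge-style walk (distinct marked vertices,
nonconstant edge sequence) contains one in which all hyperedges are pairwise distinct. -/
lemma walk_shorten (S : Set (Finset V)) :
    ∀ b : ℕ, 2 ≤ b → ∀ E : ℕ → Finset V, ∀ W : ℕ → V,
    (∀ u < b, E u ∈ S ∧ W u ∈ E u ∧ W u ∈ E ((u + 1) % b)) →
    (∀ u < b, ∀ u' < b, u ≠ u' → W u ≠ W u') →
    (∃ u < b, E u ≠ E ((u + 1) % b)) →
    ∃ b', 2 ≤ b' ∧ b' ≤ b ∧ ∃ (E' : ℕ → Finset V) (W' : ℕ → V),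
      (∀ u < b', E' u ∈ S ∧ W' u ∈ E' u ∧ W' u ∈ E' ((u + 1) % b')) ∧
      (∀ u < b', ∀ u' < b', u ≠ u' → W' u ≠ W' u') ∧
      (∀ u < b', ∀ u' < b', u ≠ u' → E' u ≠ E' u') := by
  intro b
  induction b using Nat.strong_induction_on with
  | _ b IH =>
    intro hb E W hwalk hWinj hnc
    classical
    by_cases hEinj : ∀ u < b, ∀ u' < b, u ≠ u' → E u ≠ E u'
    · exact ⟨b, hb, le_refl b, E, W, hwalk, hWinj, hEinj⟩
    push_neg at hEinj
    obtain ⟨u0, hu0, u1, hu1, huu, hEe⟩ := hEinj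
    have hex : ∃ d, 1 ≤ d ∧ ∃ s, s + d < b ∧ E s = E (s + d) := by
      rcases Nat.lt_or_ge u0 u1 with hlt | hge
      · exact ⟨u1 - u0, by omega, u0, by omega,
          by rw [show u0 + (u1 - u0) = u1 by omega]; exact hEe⟩
      · have : u1 < u0 := by omega
        exact ⟨u0 - u1, by omega, u1, by omega,
          by rw [show u1 + (u0 - u1) = u0 by omega]; exact hEe.symm⟩
    set d := Nat.find hex with hd_def
    obtain ⟨hd1, s, hsd, hEs⟩ := Nat.find_spec hex
    rcases Nat.lt_or_ge d 2 with hd2 | hd2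
    · -- d = 1 : contract a repeated consecutive pair
      have hd : d = 1 := by omega
      rw [← hd_def, hd] at hsd hEs
      rcases Nat.lt_or_ge b 3 with hb2 | hb3
      · -- b = 2 : E is constant, contradiction
        have hb2' : b = 2 := by omega
        obtain ⟨u, hu, hne⟩ := hnc
        subst hb2'
        have hs0 : s = 0 := by omega
        subst hs0
        exfalso
        interval_cases u
        · exact hne (by simpa using hEs)
        · exact hne (by simpa using hEs.symm)
      -- b ≥ 3
      set E' : ℕ → Finset V := fun u => if u ≤ s then E u else E (u + 1) with hE'
      set W' : ℕ → V := fun u => if u < s then W u else W (u + 1) with hW'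
      have hwalk' : ∀ u < b - 1, E' u ∈ S ∧ W' u ∈ E' u ∧ W' u ∈ E' ((u + 1) % (b - 1)) := by
        intro u hu
        have hmem : E' u ∈ S := by
          by_cases hc : u ≤ s
          · simpa [hE', hc] using (hwalk u (by omega)).1
          · simpa [hE', hc] using (hwalk (u + 1) (by omega)).1
        have h2 : W' u ∈ E' u := by
          rcases Nat.lt_trichotomy u s with hc | hc | hc
          · simpa [hE', hW', hc, le_of_lt hc] using (hwalk u (by omega)).2.1
          · subst hc
            have := (hwalk (u + 1) (by omega)).2.1
            simpa [hE', hW', hEs] using this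
          · have hc1 : ¬ u < s := by omega
            have hc2 : ¬ u ≤ s := by omega
            simpa [hE', hW', hc1, hc2] using (hwalk (u + 1) (by omega)).2.1
        have h3 : W' u ∈ E' ((u + 1) % (b - 1)) := by
          rcases Nat.lt_or_ge (u + 1) (b - 1) with hu1 | hu1
          · rw [Nat.mod_eq_of_lt hu1]
            rcases Nat.lt_or_ge u s with hc | hc
            · have := (hwalk u (by omega)).2.2
              rw [Nat.mod_eq_of_lt (by omega : u + 1 < b)] at this
              simpa [hE', hW', hc, show u + 1 ≤ s by omega] using this
            · have := (hwalk (u + 1) (by omega)).2.2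
              rw [Nat.mod_eq_of_lt (by omega : u + 1 + 1 < b)] at this
              simpa [hE', hW', show ¬ u < s by omega, show ¬ u + 1 ≤ s by omega] using this
          · have hu2 : u = b - 2 := by omega
            have hmod : u + 1 = b - 1 := by omega
            rw [hmod, Nat.mod_self]
            have hge' : s ≤ u := by omega
            have := (hwalk (b - 1) (by omega)).2.2
            rw [show b - 1 + 1 = b by omega, Nat.mod_self] at this
            have hW'u : W' u = W (b - 1) := by
              simp only [hW', if_neg (show ¬ u < s by omega)]
              rw [show u + 1 = b - 1 by omega]
            have hE'0 : E' 0 = E 0 := by simp [hE']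
            rw [hW'u, hE'0]; exact this
        exact ⟨hmem, h2, h3⟩
      have hWinj' : ∀ u < b - 1, ∀ u' < b - 1, u ≠ u' → W' u ≠ W' u' := by
        intro u hu u' hu' hne
        simp only [hW']
        by_cases hc : u < s <;> by_cases hc' : u' < s <;>
          simp only [hc, hc', if_true, if_false, if_pos, if_neg] <;>
          [ skip ; skip ; skip ; skip ] <;>
          exact hWinj _ (by omega) _ (by omega) (by omega)
      have hnc' : ∃ u < b - 1, E' u ≠ E' ((u + 1) % (b - 1)) := by
        by_contra hcc
        push_neg at hcc
        have hchain : ∀ t, t + 1 < b → E (t + 1) = E t := by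
          intro t ht
          rcases Nat.lt_trichotomy t s with hc | hc | hc
          · have := hcc t (by omega)
            rw [Nat.mod_eq_of_lt (by omega : t + 1 < b - 1)] at this
            simpa [hE', le_of_lt hc, show t + 1 ≤ s by omega] using this.symm
          · subst hc; exact hEs.symm
          · have := hcc (t - 1) (by omega)
            rw [Nat.mod_eq_of_lt (by omega : t - 1 + 1 < b - 1)] at this
            have e1 : E' (t - 1) = E t := by
              rcases eq_or_lt_of_le (show s + 1 ≤ t by omega) with he | he
              · rw [show E' (t - 1) = E (t - 1) from
                  by simp only [hE', if_pos (show t - 1 ≤ s by omega)]]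
                rw [show t - 1 = s by omega, hEs, he]
              · rw [show E' (t - 1) = E (t - 1 + 1) from
                  by simp only [hE', if_neg (show ¬ t - 1 ≤ s by omega)]]
                rw [show t - 1 + 1 = t by omega]
            have e2 : E' (t - 1 + 1) = E (t + 1) := by
              rw [show t - 1 + 1 = t by omega]
              simp only [hE', if_neg (show ¬ t ≤ s by omega)]
            rw [e1, e2] at this; exact this.symm
        have hconst : ∀ t < b, E t = E 0 := by
          intro t
          induction t with
          | zero => intro _; rfl
          | succ n ih => intro hn; rw [hchain n hn]; exact ih (by omega)
        obtain ⟨u, hu, hne⟩ := hnc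
        exact hne ((hconst u hu).trans (hconst ((u + 1) % b) (Nat.mod_lt _ (by omega))).symm)
      obtain ⟨b', h1, h2, rest⟩ := IH (b - 1) (by omega) (by omega) E' W' hwalk' hWinj' hnc'
      exact ⟨b', h1, by omega, rest⟩
    · -- d ≥ 2 : cut out the segment between the repeated edges
      have hconsec : ∀ t, t + 1 < b → E t ≠ E (t + 1) := by
        intro t ht he
        have := Nat.find_min hex (show 1 < d by omega)
        push_neg at this
        exact absurd he (by simpa using this (le_refl 1) t ht)
      set E' : ℕ → Finset V := fun u => E (s + u) with hE'
      set W' : ℕ → V := fun u => W (s + u) with hW'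
      have hwalk' : ∀ u < d, E' u ∈ S ∧ W' u ∈ E' u ∧ W' u ∈ E' ((u + 1) % d) := by
        intro u hu
        obtain ⟨hm, hw1, hw2⟩ := hwalk (s + u) (by omega)
        refine ⟨hm, hw1, ?_⟩
        rcases Nat.lt_or_ge (u + 1) d with hu1 | hu1
        · rw [Nat.mod_eq_of_lt hu1]
          rw [Nat.mod_eq_of_lt (by omega : s + u + 1 < b)] at hw2
          simpa [hE', show s + (u + 1) = s + u + 1 by omega] using hw2
        · have : u + 1 = d := by omega
          rw [this, Nat.mod_self]
          rw [Nat.mod_eq_of_lt (by omega : s + u + 1 < b)] at hw2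
          have : E' 0 = E (s + u + 1) := by
            simp only [hE', Nat.add_zero, hEs]; congr 1; omega
          rw [this]; exact hw2
      have hWinj' : ∀ u < d, ∀ u' < d, u ≠ u' → W' u ≠ W' u' := by
        intro u hu u' hu' hne
        exact hWinj (s + u) (by omega) (s + u') (by omega) (by omega)
      have hnc' : ∃ u < d, E' u ≠ E' ((u + 1) % d) := by
        refine ⟨0, by omega, ?_⟩
        rw [Nat.mod_eq_of_lt (by omega : 0 + 1 < d)]
        simpa [hE'] using hconsec s (by omega)
      obtain ⟨b', h1, h2, rest⟩ := IH d (by omega) hd2 E' W' hwalk' hWinj' hnc'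
      exact ⟨b', h1, by omega, rest⟩

/-- A closed walk whose hyperedges lie in `𝒜 i ∪ 𝒜 j` and whose consecutive
hyperedges are distinct must have even length, by alternation of colours. -/
lemma walk_even (𝒜 : ℕ → Set (Finset V)) (i j : ℕ)
    (hdisj : ∀ i, ∀ A ∈ 𝒜 i, ∀ B ∈ 𝒜 i, A ≠ B → Disjoint A B)
    (b : ℕ) (hb : 2 ≤ b) (E : ℕ → Finset V) (W : ℕ → V)
    (hwalk : ∀ u < b, E u ∈ 𝒜 i ∪ 𝒜 j ∧ W u ∈ E u ∧ W u ∈ E ((u + 1) % b))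
    (hne : ∀ u < b, E u ≠ E ((u + 1) % b)) : Even b := by
  classical
  have halt : ∀ u < b, (E u ∈ 𝒜 i ↔ E ((u + 1) % b) ∉ 𝒜 i) := by
    intro u hu
    obtain ⟨hS, hw1, hw2⟩ := hwalk u hu
    obtain ⟨hS', -, -⟩ := hwalk ((u + 1) % b) (Nat.mod_lt _ (by omega))
    have hcontra : ∀ κ, E u ∈ 𝒜 κ → E ((u + 1) % b) ∈ 𝒜 κ → False := by
      intro κ hA hB
      exact Finset.disjoint_left.mp (hdisj κ _ hA _ hB (hne u hu)) hw1 hw2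
    have h1 := hcontra i
    have h2 := hcontra j
    rcases hS with hS | hS <;> rcases hS' with hS' | hS' <;> tauto
  have hpar : ∀ n ≤ b, (E (n % b) ∈ 𝒜 i ↔ (E 0 ∈ 𝒜 i ↔ Even n)) := by
    intro n
    induction n with
    | zero => intro _; simp
    | succ n ih =>
      intro hn
      have hnb : n < b := by omega
      have ih' := ih (by omega)
      rw [Nat.mod_eq_of_lt hnb] at ih'
      have ha := halt n hnb
      rw [Nat.even_add_one]
      tauto
  have := hpar b (le_refl b)
  rw [Nat.mod_self] at this
  tauto

end aux

theorem stmt_13 {V : Type*} [DecidableEq V] (k ℓ : ℕ) (hk : 3 ≤ k)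
    (G : SimpleGraph V) (c : Sym2 V → ℕ)
    -- every colour class is a vertex-disjoint union of copies of `K_{k-1}`
    (𝒜 : ℕ → Set (Finset V))
    (hcard : ∀ i, ∀ A ∈ 𝒜 i, A.card = k - 1)
    (hdisj : ∀ i, ∀ A ∈ 𝒜 i, ∀ B ∈ 𝒜 i, A ≠ B → Disjoint A B)
    (hclass : ∀ i, ∀ x y : V, x ≠ y →
      ((G.Adj x y ∧ c s(x, y) = i) ↔ ∃ A ∈ 𝒜 i, x ∈ A ∧ y ∈ A))
    -- for every two colours `i, j`, the hypergraph of monochromatic `K_{k-1}`'s in colours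
    -- `i` or `j` has no (Berge) cycle of length at most `2⌊ℓ/2⌋`
    (hgirth : ∀ i j : ℕ, ∀ t : ℕ, 2 ≤ t → t ≤ 2 * (ℓ / 2) →
      ¬ ∃ (e : ZMod t → Finset V) (w : ZMod t → V),
        Function.Injective e ∧ Function.Injective w ∧
        ∀ s : ZMod t, e s ∈ 𝒜 i ∪ 𝒜 j ∧ w s ∈ e s ∧ w s ∈ e (s + 1)) :
    -- every cycle of length `h` with `k ≤ h ≤ ℓ` receives at least 3 colours
    ∀ (h : ℕ) (v : ZMod h → V), k ≤ h → h ≤ ℓ → Function.Injective v →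
      (∀ t : ZMod h, G.Adj (v t) (v (t + 1))) →
      3 ≤ (Set.range fun t : ZMod h => c s(v t, v (t + 1))).ncard := by
  intro h v hkh hhl hv hadj
  classical
  by_contra h3
  push_neg at h3
  haveI : NeZero h := ⟨by omega⟩
  set f : ZMod h → ℕ := fun t => c s(v t, v (t + 1)) with hf
  -- Step 1: at most two colours i, j are used
  have hfin : (Set.range f).Finite := Set.finite_range f
  obtain ⟨i, j, hij⟩ : ∃ i j, ∀ t : ZMod h, f t = i ∨ f t = j := by
    by_cases hone : ∀ t : ZMod h, f t = f 0
    · exact ⟨f 0, f 0, fun t => Or.inl (hone t)⟩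
    push_neg at hone
    obtain ⟨t0, ht0⟩ := hone
    refine ⟨f 0, f t0, fun t => ?_⟩
    by_contra hc
    push_neg at hc
    have hsub : ({f 0, f t0, f t} : Set ℕ) ⊆ Set.range f := by
      rintro x (rfl | rfl | rfl) <;> exact Set.mem_range_self _
    have h3' : ({f 0, f t0, f t} : Set ℕ).ncard = 3 :=
      Set.ncard_eq_three.mpr ⟨f 0, f t0, f t, fun he => ht0 he.symm, fun he => hc.1 he.symm,
        fun he => hc.2 he.symm, rfl⟩
    have := Set.ncard_le_ncard hsub hfin
    omega
  -- Step 2: choose the hyperedges along the cycle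
  have hone_ne_zero : (1 : ZMod h) ≠ 0 := by
    intro he
    have : ((1 : ℕ) : ZMod h) = 0 := by exact_mod_cast he
    have := (ZMod.natCast_eq_zero_iff 1 h).mp this
    have := Nat.le_of_dvd one_pos this
    omega
  have hvne : ∀ t : ZMod h, v t ≠ v (t + 1) := by
    intro t he
    have := hv he
    simp only [left_eq_add] at this
    exact hone_ne_zero this
  have hA : ∀ t : ZMod h, ∃ A, A ∈ 𝒜 i ∪ 𝒜 j ∧ v t ∈ A ∧ v (t + 1) ∈ A := by
    intro t
    obtain ⟨A, hAmem, hxA, hyA⟩ :=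
      (hclass (f t) (v t) (v (t + 1)) (hvne t)).mp ⟨hadj t, rfl⟩
    rcases hij t with he | he
    · exact ⟨A, Or.inl (he ▸ hAmem), hxA, hyA⟩
    · exact ⟨A, Or.inr (he ▸ hAmem), hxA, hyA⟩
  choose A hAmem hAv hAv1 using hA
  -- Step 3: build the ℕ-indexed closed walk of length h
  set E : ℕ → Finset V := fun u => A (u : ZMod h) with hE
  set W : ℕ → V := fun u => v ((u : ZMod h) + 1) with hW
  have hb : 2 ≤ h := by omega
  have hcast : ∀ u : ℕ, (((u + 1) % h : ℕ) : ZMod h) = (u : ZMod h) + 1 := by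
    intro u; rw [ZMod.natCast_mod]; push_cast; ring
  have hwalk : ∀ u < h, E u ∈ 𝒜 i ∪ 𝒜 j ∧ W u ∈ E u ∧ W u ∈ E ((u + 1) % h) := by
    intro u hu
    refine ⟨hAmem _, hAv1 _, ?_⟩
    show v ((u : ZMod h) + 1) ∈ A (((u + 1) % h : ℕ) : ZMod h)
    rw [hcast u]
    exact hAv _
  have hWinj : ∀ u < h, ∀ u' < h, u ≠ u' → W u ≠ W u' := by
    intro u hu u' hu' hne he
    have := hv he
    have h2 : (u : ZMod h) = (u' : ZMod h) := by
      have := add_right_cancel this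
      exact this
    have := congrArg ZMod.val h2
    rw [ZMod.val_cast_of_lt hu, ZMod.val_cast_of_lt hu'] at this
    exact hne this
  have hnc : ∃ u < h, E u ≠ E ((u + 1) % h) := by
    by_contra hcc
    push_neg at hcc
    have hstep : ∀ t : ZMod h, A (t + 1) = A t := by
      intro t
      have hu : t.val < h := ZMod.val_lt t
      have := hcc t.val hu
      simp only [hE] at this
      rw [hcast t.val, ZMod.natCast_rightInverse t] at this
      exact this.symm
    have hconstN : ∀ n : ℕ, A ((n : ZMod h)) = A 0 := by
      intro n
      induction n with
      | zero => simp
      | succ n ih => push_cast; rw [hstep ((n : ZMod h))]; exact ih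
    have hconst : ∀ t : ZMod h, A t = A 0 := by
      intro t
      have := hconstN t.val
      rwa [ZMod.natCast_rightInverse t] at this
    -- all cycle vertices lie in A 0, contradiction with card
    have hsub : Finset.univ.image v ⊆ A 0 := by
      intro x hx
      obtain ⟨t, -, rfl⟩ := Finset.mem_image.mp hx
      have := hAv t
      rwa [hconst t] at this
    have hcard0 : (A 0).card = k - 1 := by
      rcases hAmem 0 with hm | hm
      · exact hcard i _ hm
      · exact hcard j _ hm
    have h1 : (Finset.univ.image v).card = h := by
      rw [Finset.card_image_of_injective _ hv, Finset.card_univ, ZMod.card]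
    have := Finset.card_le_card hsub
    omega
  -- Step 4: shorten to a walk with pairwise distinct hyperedges
  obtain ⟨b', hb2, hbh, E', W', hwalk', hWinj', hE'inj⟩ :=
    walk_shorten (𝒜 i ∪ 𝒜 j) h hb E W hwalk hWinj hnc
  have hne' : ∀ u < b', E' u ≠ E' ((u + 1) % b') := by
    intro u hu
    rcases Nat.lt_or_ge (u + 1) b' with h1 | h1
    · rw [Nat.mod_eq_of_lt h1]
      exact hE'inj u hu (u + 1) h1 (by omega)
    · have hu1 : u + 1 = b' := by omega
      rw [hu1, Nat.mod_self]
      exact hE'inj u hu 0 (by omega) (by omega)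
  -- Step 5: the walk has even length, hence length ≤ 2⌊ℓ/2⌋
  have heven : Even b' := walk_even 𝒜 i j hdisj b' hb2 E' W' hwalk' hne'
  obtain ⟨m, hm⟩ := heven
  have hble : b' ≤ 2 * (ℓ / 2) := by omega
  -- Step 6: build the ZMod b' cycle and contradict hgirth
  haveI : NeZero b' := ⟨by omega⟩
  haveI : Fact (1 < b') := ⟨by omega⟩
  refine hgirth i j b' hb2 hble ⟨fun s => E' s.val, fun s => W' s.val, ?_, ?_, ?_⟩
  · intro s s' he
    by_contra hss
    exact hE'inj s.val (ZMod.val_lt s) s'.val (ZMod.val_lt s')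
      (fun hv => hss (ZMod.val_injective b' hv)) he
  · intro s s' he
    by_contra hss
    exact hWinj' s.val (ZMod.val_lt s) s'.val (ZMod.val_lt s')
      (fun hv => hss (ZMod.val_injective b' hv)) he
  · intro s
    obtain ⟨hm', hw1, hw2⟩ := hwalk' s.val (ZMod.val_lt s)
    refine ⟨hm', hw1, ?_⟩
    show W' s.val ∈ E' ((s + 1).val)
    have : (s + 1).val = (s.val + 1) % b' := by
      rw [ZMod.val_add, ZMod.val_one]
    rw [this]
    exact hw2
end
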